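/- arXiv:math/0407432 — 6 statements merged into one kernel-verified Lean document; each statement's English description precedes it below -/
import Mathlib

section
/- Every real solution of y'' = 6y² − x has an interval of existence that is bounded below; i.e., no real solution of the first Painlevé equation can be extended to all of (−∞, x₀] for any x₀. -/
/-!
Follow a solution to the left. Since `y'' = 6y² - x ≥ 1` for `x ≤ -1`, `y' → -∞`, hence `y → +∞`.
The energy `E = y'²/2 - 2y³` has `E' = -x y' ≤ 0` there, so `E` stays bounded below and
eventually `y'² ≥ y³`, i.e. `-y' ≥ y^{3/2}`. Then `y^{-1/2}` grows with slope at least `1/2`,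
so going left it reaches `0` in finite time: the solution blows up.
-/

open Filter Set Topology

lemma monotoneOn_Iic_of_hasDerivAt_nonneg {f f' : ℝ → ℝ} {b : ℝ}
    (hf : ∀ x ≤ b, HasDerivAt f (f' x) x) (hf' : ∀ x ≤ b, 0 ≤ f' x) : MonotoneOn f (Iic b) :=
  monotoneOn_of_hasDerivWithinAt_nonneg (convex_Iic b)
    (fun x hx => (hf x hx).continuousAt.continuousWithinAt)
    (fun x hx => by rw [interior_Iic] at hx ⊢; exact (hf x hx.le).hasDerivWithinAt)
    (fun x hx => hf' x (interior_subset (s := Iic b) hx))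

lemma tendsto_atBot_of_hasDerivAt_ge {f f' : ℝ → ℝ} {c : ℝ} (hc : 0 < c)
    (h : ∀ᶠ x in atBot, HasDerivAt f (f' x) x ∧ c ≤ f' x) : Tendsto f atBot atBot := by
  obtain ⟨b, hb⟩ := eventually_atBot.1 h
  have hmono : MonotoneOn (fun x => f x - c * x) (Iic b) :=
    monotoneOn_Iic_of_hasDerivAt_nonneg
      (fun x hx => ((hb x hx).1.sub ((hasDerivAt_id x).const_mul c)).congr_deriv (by simp))
      (fun x hx => sub_nonneg.2 (hb x hx).2)
  have hle : ∀ᶠ x in atBot, f x ≤ c * x + (f b - c * b) :=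
    (eventually_le_atBot b).mono fun x hx => by linarith [hmono hx (mem_Iic.2 le_rfl) hx]
  exact tendsto_atBot_mono' atBot hle
    (tendsto_atBot_add_const_right _ _ (tendsto_id.const_mul_atBot hc))

lemma exists_eventually_le_of_hasDerivAt_nonpos {f f' : ℝ → ℝ}
    (h : ∀ᶠ x in atBot, HasDerivAt f (f' x) x ∧ f' x ≤ 0) : ∃ m, ∀ᶠ x in atBot, m ≤ f x := by
  obtain ⟨b, hb⟩ := eventually_atBot.1 h
  have hmono : MonotoneOn (fun x => -f x) (Iic b) :=
    monotoneOn_Iic_of_hasDerivAt_nonneg (fun x hx => (hb x hx).1.neg)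
      (fun x hx => neg_nonneg.2 (hb x hx).2)
  exact ⟨f b, (eventually_le_atBot b).mono fun x hx =>
    neg_le_neg_iff.1 (hmono hx (mem_Iic.2 le_rfl) hx)⟩

lemma not_eventually_atBot_cube_le_deriv_sq (y y' : ℝ → ℝ) :
    ¬ ∀ᶠ x in atBot, HasDerivAt y (y' x) x ∧ 0 < y x ∧ y' x ≤ 0 ∧ y x ^ 3 ≤ y' x ^ 2 := by
  intro h
  have hw : Tendsto (fun x => (√(y x))⁻¹) atBot atBot := by
    refine tendsto_atBot_of_hasDerivAt_ge
      (f' := fun x => -(y' x / (2 * √(y x))) / √(y x) ^ 2) one_half_pos ?_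
    filter_upwards [h] with x ⟨hy, hpos, hneg, hcube⟩
    have hs : 0 < √(y x) := Real.sqrt_pos.2 hpos
    refine ⟨(hy.sqrt hpos.ne').inv hs.ne', ?_⟩
    have hsq : √(y x) ^ 2 = y x := Real.sq_sqrt hpos.le
    have hs3 : √(y x) ^ 3 ≤ -y' x := by
      refine (pow_le_pow_iff_left₀ (by positivity) (by linarith) two_ne_zero).1 ?_
      calc (√(y x) ^ 3) ^ 2 = (√(y x) ^ 2) ^ 3 := by ring
        _ = y x ^ 3 := by rw [hsq]
        _ ≤ (-y' x) ^ 2 := by rwa [neg_sq]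
    rw [show -(y' x / (2 * √(y x))) / √(y x) ^ 2 = -y' x / (2 * √(y x) ^ 3) by
      field_simp, le_div_iff₀ (by positivity)]
    linarith
  obtain ⟨x, hx, hpos⟩ := ((hw.eventually (eventually_le_atBot 0)).and h).exists
  exact (inv_pos.2 (Real.sqrt_pos.2 hpos.2.1)).not_ge hx

noncomputable def painleveIEnergy (y y' : ℝ → ℝ) (x : ℝ) : ℝ := y' x ^ 2 / 2 - 2 * y x ^ 3

lemma hasDerivAt_painleveIEnergy {y y' : ℝ → ℝ} {x : ℝ} (hy : HasDerivAt y (y' x) x)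
    (hy' : HasDerivAt y' (6 * y x ^ 2 - x) x) :
    HasDerivAt (painleveIEnergy y y') (-(x * y' x)) x :=
  (((hy'.pow 2).div_const 2).sub ((hy.pow 3).const_mul 2)).congr_deriv (by push_cast; ring)

/-- Every real solution of the first Painlevé equation `y'' = 6y² - x` has an
interval of existence bounded below: no solution extends to all of `(-∞, x₀]`. -/
theorem painleveI_no_solution_on_left_ray :
    ¬ ∃ (y y' : ℝ → ℝ) (x₀ : ℝ),
      ∀ x ≤ x₀, HasDerivAt y (y' x) x ∧ HasDerivAt y' (6 * (y x) ^ 2 - x) x := by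
  rintro ⟨y, y', x₀, h⟩
  have hsol : ∀ᶠ x in atBot, HasDerivAt y (y' x) x ∧ HasDerivAt y' (6 * y x ^ 2 - x) x :=
    eventually_atBot.2 ⟨x₀, h⟩
  have hy' : Tendsto y' atBot atBot := by
    refine tendsto_atBot_of_hasDerivAt_ge (f' := fun x => 6 * y x ^ 2 - x) one_pos ?_
    filter_upwards [hsol, eventually_le_atBot (-1)] with x hx hx1
    exact ⟨hx.2, by linarith [sq_nonneg (y x)]⟩
  have hy : Tendsto y atBot atTop := by
    refine tendsto_neg_atBot_iff.1
      (tendsto_atBot_of_hasDerivAt_ge (f' := fun x => -y' x) one_pos ?_)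
    filter_upwards [hsol, hy'.eventually_le_atBot (-1)] with x hx hx1
    exact ⟨hx.1.neg, by linarith⟩
  obtain ⟨e, he⟩ : ∃ e, ∀ᶠ x in atBot, e ≤ painleveIEnergy y y' x := by
    refine exists_eventually_le_of_hasDerivAt_nonpos (f' := fun x => -(x * y' x)) ?_
    filter_upwards [hsol, hy'.eventually_le_atBot 0, eventually_le_atBot 0] with x hx hx' hx0
    exact ⟨hasDerivAt_painleveIEnergy hx.1 hx.2,
      neg_nonpos.2 (mul_nonneg_of_nonpos_of_nonpos hx0 hx')⟩
  refine not_eventually_atBot_cube_le_deriv_sq y y' ?_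
  filter_upwards [hsol, hy.eventually_gt_atTop 0, hy'.eventually_le_atBot 0, he,
    ((tendsto_pow_atTop three_ne_zero).comp hy).eventually_ge_atTop (-(2 * e) / 3)]
    with x hx hpos hneg hex hcube
  refine ⟨hx.1, hpos, hneg, ?_⟩
  simp only [painleveIEnergy, Function.comp_apply] at hex hcube
  linarith
end

section
/- If u : ℝ → ℝ satisfies u''(t) = 6 u(t)² + t on [t₀, ∞) with t₀ > 0, then u cannot exist on all of [t₀, ∞); that is, every solution of u'' = 6u² + t with t₀ > 0 blows up in finite time to the right. -/
open Filter Set Topology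

/-! Since `u'' ≥ t₀ > 0`, eventually `u' ≥ 1`, and then `u → ∞`. The energy `u'² - 4u³` has
derivative `2tu' ≥ 0`, so it is bounded below, and hence eventually `u'² ≥ u³`, i.e.
`u' ≥ u^{3/2}`. Such superlinear growth cannot persist on a half-line. -/

theorem mul_sub_le_sub_of_hasDerivAt_Ici {f f' : ℝ → ℝ} {a c : ℝ}
    (hf : ∀ x ∈ Ici a, HasDerivAt f (f' x) x) (hc : ∀ x ∈ Ici a, c ≤ f' x)
    {b : ℝ} (hb : a ≤ b) : c * (b - a) ≤ f b - f a := by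
  refine (convex_Ici a).mul_sub_le_image_sub_of_le_deriv
    (fun x hx => (hf x hx).continuousAt.continuousWithinAt)
    (fun x hx => (hf x (interior_subset hx)).differentiableAt.differentiableWithinAt)
    (fun x hx => ?_) a self_mem_Ici b hb hb
  rw [(hf x (interior_subset hx)).deriv]
  exact hc x (interior_subset hx)

theorem tendsto_atTop_of_hasDerivAt_Ici {f f' : ℝ → ℝ} {a c : ℝ} (hc₀ : 0 < c)
    (hf : ∀ x ∈ Ici a, HasDerivAt f (f' x) x) (hc : ∀ x ∈ Ici a, c ≤ f' x) :
    Tendsto f atTop atTop := by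
  have hlin : Tendsto (fun x => f a + c * (x - a)) atTop atTop :=
    tendsto_atTop_add_const_left _ _
      ((tendsto_atTop_add_const_right _ _ tendsto_id).const_mul_atTop hc₀)
  refine tendsto_atTop_mono' _ ?_ hlin
  filter_upwards [eventually_ge_atTop a] with x hx
  linarith [mul_sub_le_sub_of_hasDerivAt_Ici hf hc hx]

/-- The comparison function is `u ^ (1 - p)`, which stays positive yet decreases at rate
at least `p - 1`. -/
theorem not_forall_rpow_le_deriv_Ici {u u' : ℝ → ℝ} {a p : ℝ} (hp : 1 < p) :
    ¬ ∀ t ∈ Ici a, HasDerivAt u (u' t) t ∧ 0 < u t ∧ u t ^ p ≤ u' t := by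
  intro H
  set φ : ℝ → ℝ := fun t => -u t ^ (1 - p)
  have hφ : ∀ t ∈ Ici a, HasDerivAt φ ((p - 1) * (u' t * u t ^ (-p))) t := by
    intro t ht
    have h : HasDerivAt φ _ t :=
      ((H t ht).1.rpow_const (p := 1 - p) (Or.inl (H t ht).2.1.ne')).neg
    convert h using 1
    rw [show 1 - p - 1 = -p by ring]
    ring
  have hφ' : ∀ t ∈ Ici a, p - 1 ≤ (p - 1) * (u' t * u t ^ (-p)) := by
    intro t ht
    obtain ⟨-, hpos, hle⟩ := H t ht
    have : u t ^ p * u t ^ (-p) = 1 := by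
      rw [Real.rpow_neg hpos.le, mul_inv_cancel₀ (Real.rpow_pos_of_pos hpos p).ne']
    have hinv : 0 ≤ u t ^ (-p) := Real.rpow_nonneg hpos.le _
    nlinarith [mul_nonneg (mul_nonneg (sub_nonneg.2 hle) hinv) (sub_pos.2 hp).le]
  have hφ_neg : ∀ t ∈ Ici a, φ t < 0 := fun t ht =>
    neg_neg_of_pos (Real.rpow_pos_of_pos (H t ht).2.1 _)
  have hb : a ≤ a - φ a / (p - 1) := by
    have := div_neg_of_neg_of_pos (hφ_neg a self_mem_Ici) (sub_pos.2 hp)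
    linarith
  have hgrowth := mul_sub_le_sub_of_hasDerivAt_Ici hφ hφ' hb
  rw [sub_sub_cancel_left, mul_neg, mul_div_cancel₀ _ (sub_pos.2 hp).ne'] at hgrowth
  linarith [hφ_neg _ hb]

theorem painleveI_energy_hasDerivAt {u u' : ℝ → ℝ} {t : ℝ} (hu : HasDerivAt u (u' t) t)
    (hu' : HasDerivAt u' (6 * u t ^ 2 + t) t) :
    HasDerivAt (fun s => u' s ^ 2 - 4 * u s ^ 3) (2 * t * u' t) t := by
  have h : HasDerivAt (fun s => u' s ^ 2 - 4 * u s ^ 3) _ t :=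
    (hu'.pow 2).sub ((hu.pow 3).const_mul 4)
  convert h using 1
  push_cast
  ring

theorem rpow_three_halves_le_of_pow_three_le_sq {x y : ℝ} (hx : 0 ≤ x) (hy : 0 ≤ y)
    (h : x ^ 3 ≤ y ^ 2) : x ^ (3 / 2 : ℝ) ≤ y := by
  refine le_of_pow_le_pow_left₀ two_ne_zero hy ?_
  rwa [← Real.rpow_natCast, ← Real.rpow_mul hx,
    show (3 / 2 : ℝ) * (2 : ℕ) = (3 : ℕ) by norm_num, Real.rpow_natCast]

/-- Every solution of `u'' = 6u² + t` starting at `t₀ > 0` blows up in finite time: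
it cannot exist on all of `[t₀, ∞)`. -/
theorem painleveI_t_variable_blowup (t₀ : ℝ) (ht₀ : 0 < t₀) (u u' : ℝ → ℝ) :
    ¬ ∀ t ∈ Set.Ici t₀, HasDerivAt u (u' t) t ∧ HasDerivAt u' (6 * (u t) ^ 2 + t) t := by
  intro H
  have hu'_top : Tendsto u' atTop atTop :=
    tendsto_atTop_of_hasDerivAt_Ici ht₀ (fun t ht => (H t ht).2)
      (fun t ht => by nlinarith [sq_nonneg (u t), mem_Ici.1 ht])
  obtain ⟨t₁, ht₁⟩ := eventually_atTop.1
    ((hu'_top.eventually_ge_atTop 1).and (eventually_ge_atTop t₀))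
  have hu_top : Tendsto u atTop atTop :=
    tendsto_atTop_of_hasDerivAt_Ici one_pos (fun t ht => (H t (ht₁ t ht).2).1)
      (fun t ht => (ht₁ t ht).1)
  set C := u' t₁ ^ 2 - 4 * u t₁ ^ 3
  have henergy : ∀ t ≥ t₁, C ≤ u' t ^ 2 - 4 * u t ^ 3 := by
    intro t ht
    have := mul_sub_le_sub_of_hasDerivAt_Ici (c := 0)
      (fun s hs => painleveI_energy_hasDerivAt (H s (ht₁ s hs).2).1 (H s (ht₁ s hs).2).2)
      (fun s hs => by nlinarith [ht₁ s hs]) ht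
    linarith
  obtain ⟨a, ha⟩ := eventually_atTop.1
    ((hu_top.eventually_ge_atTop (max 1 (-C))).and (eventually_ge_atTop t₁))
  refine not_forall_rpow_le_deriv_Ici (u := u) (u' := u') (a := a) (p := 3 / 2) (by norm_num)
    fun t ht => ?_
  obtain ⟨hut, hat⟩ := ha t ht
  obtain ⟨hu't, ht₀t⟩ := ht₁ t hat
  have hu_one : 1 ≤ u t := le_of_max_le_left hut
  have hcube : u t ^ 3 ≤ u' t ^ 2 := by
    have hcube_ge : u t ≤ u t ^ 3 := by nlinarith [one_le_pow₀ (n := 2) hu_one]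
    nlinarith [henergy t hat, le_of_max_le_right hut]
  exact ⟨(H t ht₀t).1, by linarith,
    rpow_three_halves_le_of_pow_three_le_sq (by linarith) (by linarith) hcube⟩
end

section
/- Suppose u satisfies u'' = 6u² + t on an interval containing [t₀, t₁] with t₀ > 0, u is positive and increasing on [t₀, t₁], and (u'(t))² > u(t)³ on [t₀, t₁]. Then t₁ − t₀ < 2/√(u(t₀)). -/
open Filter Set Topology

/-!
Along the solution `u' > u^{3/2}` (the sign of `u'` comes from monotonicity), i.e.
`(2 / √u)' = -u' / u^{3/2} < -1`. Hence `t ↦ 2 / √(u t) + t` is nonincreasing, and comparing its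
values at `t₀` and `t₁` gives `t₁ - t₀ ≤ 2 / √(u t₀) - 2 / √(u t₁) < 2 / √(u t₀)`.
-/

theorem HasDerivAt.two_div_sqrt {f : ℝ → ℝ} {f' x : ℝ} (hf : HasDerivAt f f' x) (hx : 0 < f x) :
    HasDerivAt (fun y => 2 / √(f y)) (-(f' / (f x * √(f x)))) x := by
  have hsqrt : √(f x) ≠ 0 := (Real.sqrt_pos.2 hx).ne'
  refine ((hasDerivAt_const x 2).fun_div (hf.sqrt hx.ne') hsqrt).congr_deriv ?_
  rw [Real.sq_sqrt hx.le]
  field_simp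
  ring

theorem mul_sqrt_lt_of_pow_three_lt_sq {a b : ℝ} (ha : 0 ≤ a) (hb : 0 ≤ b) (h : a ^ 3 < b ^ 2) :
    a * √a < b := by
  refine lt_of_pow_lt_pow_left₀ 2 hb ?_
  rw [mul_pow, Real.sq_sqrt ha]
  linarith

theorem antitoneOn_two_div_sqrt_add {u u' : ℝ → ℝ} {a b : ℝ}
    (hu : ∀ t ∈ Icc a b, HasDerivAt u (u' t) t) (hpos : ∀ t ∈ Icc a b, 0 < u t)
    (hmono : MonotoneOn u (Icc a b)) (hineq : ∀ t ∈ Ioo a b, u t ^ 3 < u' t ^ 2) :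
    AntitoneOn (fun t => 2 / √(u t) + t) (Icc a b) := by
  have hderiv : ∀ t ∈ Icc a b,
      HasDerivAt (fun t => 2 / √(u t) + t) (-(u' t / (u t * √(u t))) + 1) t := fun t ht =>
    ((hu t ht).two_div_sqrt (hpos t ht)).add (hasDerivAt_id' t)
  refine antitoneOn_of_hasDerivWithinAt_nonpos (convex_Icc a b)
    (fun t ht => (hderiv t ht).continuousAt.continuousWithinAt)
    (fun t ht => (hderiv t (interior_subset ht)).hasDerivWithinAt) fun t ht => ?_
  rw [interior_Icc] at ht
  have htIcc : t ∈ Icc a b := Ioo_subset_Icc_self ht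
  have hu'_nonneg : 0 ≤ u' t :=
    ((hu t htIcc).hasDerivWithinAt.nonneg_of_monotoneOn (isOpen_Ioo.preperfect t ht)
      (hmono.mono Ioo_subset_Icc_self))
  have hlt : u t * √(u t) < u' t :=
    mul_sqrt_lt_of_pow_three_lt_sq (hpos t htIcc).le hu'_nonneg (hineq t ht)
  have hone : 1 ≤ u' t / (u t * √(u t)) :=
    (one_le_div (by positivity [hpos t htIcc])).2 hlt.le
  linarith

theorem painleveI_time_estimate_general (t₀ t₁ : ℝ)
    (u u' : ℝ → ℝ)
    (hode : ∀ t ∈ Set.Icc t₀ t₁,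
      HasDerivAt u (u' t) t ∧ HasDerivAt u' (6 * (u t) ^ 2 + t) t)
    (hpos : ∀ t ∈ Set.Icc t₀ t₁, 0 < u t)
    (hmono : StrictMonoOn u (Set.Icc t₀ t₁))
    (hineq : ∀ t ∈ Set.Icc t₀ t₁, (u t) ^ 3 < (u' t) ^ 2) :
    t₁ - t₀ < 2 / Real.sqrt (u t₀) := by
  rcases lt_or_ge t₁ t₀ with hlt | hle
  · have : 0 ≤ 2 / √(u t₀) := by positivity
    linarith
  have hanti := antitoneOn_two_div_sqrt_add (fun t ht => (hode t ht).1) hpos hmono.monotoneOn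
    fun t ht => hineq t (Ioo_subset_Icc_self ht)
  have hends : 2 / √(u t₁) + t₁ ≤ 2 / √(u t₀) + t₀ := hanti ⟨le_rfl, hle⟩ ⟨hle, le_rfl⟩ hle
  have : 0 < 2 / √(u t₁) := div_pos two_pos (Real.sqrt_pos.2 (hpos t₁ ⟨hle, le_rfl⟩))
  linarith

/-- If `u'' = 6u² + t` on `[t₀, t₁]` with `t₀ > 0`, `u` positive and increasing,
and `(u')² > u³` there, then `t₁ - t₀ < 2 / √(u t₀)`. -/
theorem painleveI_time_estimate (t₀ t₁ : ℝ) (ht₀ : 0 < t₀) (h01 : t₀ ≤ t₁)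
    (u u' : ℝ → ℝ)
    (hode : ∀ t ∈ Set.Icc t₀ t₁,
      HasDerivAt u (u' t) t ∧ HasDerivAt u' (6 * (u t) ^ 2 + t) t)
    (hpos : ∀ t ∈ Set.Icc t₀ t₁, 0 < u t)
    (hmono : StrictMonoOn u (Set.Icc t₀ t₁))
    (hineq : ∀ t ∈ Set.Icc t₀ t₁, (u t) ^ 3 < (u' t) ^ 2) :
    t₁ - t₀ < 2 / Real.sqrt (u t₀) :=
  painleveI_time_estimate_general t₀ t₁ u u' hode hpos hmono hineq
end

section
/- Let y₁, y₂ be two real solutions of y'' = 6y² − x on an interval in (−∞, 0], with y₁(x₀) = y₂(x₀) = y₀ and y'₂(x₀) > y'₁(x₀) ≥ 0 at some x₀ ≤ 0. Then to the right of x₀, y₂(x) > y₁(x) for all x in the intersection of the intervals of existence with x > x₀, and the right endpoint b₂ of the interval of existence of y₂ is strictly less than the right endpoint b₁ of that of y₁. -/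
open Filter Set Topology

/-!
Along a solution of `y'' = 6y² - (x + c)` the energy `E = y'² - 4y³ + 2(x + c)y` has `E' = 2y`.
Let `u` solve P-I and `v` the translated equation with `c ≥ 0` on an interval in `x ≤ 0`, with
`u = v` and `u' > v' ≥ 0` at its left end. Up to a first point where the slopes met we would have
`u ≥ v`, so `E_u - E_v` has grown, while at that point its cubic, `x`- and `c`-terms all have a
favourable sign; this forces `u'² > v'²` there, a contradiction. So `u' > v'`, hence `u > v`.

For the blow-up points pick `x > x₀`, so `y₂(x) > y₁(x)`, and let `σ > x` be where `y₁` reaches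
`y₂(x)`. Comparing energies on `[x₀, x]` (with `y₂`) and on `[x, σ]` (with the constant `y₂(x)`)
gives `y₁'(σ) < y₂'(x)`, so the translate `y₁(· + σ - x)` stays below `y₂`. It blows up at
`b₁ - (σ - x)`, hence `b₂ ≤ b₁ - (σ - x) < b₁`.
-/

lemma strictMonoOn_of_forall_hasDerivAt {D : Set ℝ} (hD : Convex ℝ D) {f f' : ℝ → ℝ}
    (hf : ∀ x ∈ D, HasDerivAt f (f' x) x) (hf'₀ : ∀ x ∈ interior D, 0 < f' x) :
    StrictMonoOn f D :=
  strictMonoOn_of_hasDerivWithinAt_pos hD (fun x hx ↦ (hf x hx).continuousAt.continuousWithinAt)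
    (fun x hx ↦ (hf x (interior_subset hx)).hasDerivWithinAt) hf'₀

lemma monotoneOn_of_forall_hasDerivAt {D : Set ℝ} (hD : Convex ℝ D) {f f' : ℝ → ℝ}
    (hf : ∀ x ∈ D, HasDerivAt f (f' x) x) (hf'₀ : ∀ x ∈ interior D, 0 ≤ f' x) :
    MonotoneOn f D :=
  monotoneOn_of_hasDerivWithinAt_nonneg hD (fun x hx ↦ (hf x hx).continuousAt.continuousWithinAt)
    (fun x hx ↦ (hf x (interior_subset hx)).hasDerivWithinAt) hf'₀

lemma exists_first_nonpos {f : ℝ → ℝ} {a b : ℝ} (hab : a ≤ b) (hf : ContinuousOn f (Icc a b))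
    (ha : 0 < f a) (hb : f b ≤ 0) : ∃ c ∈ Ioc a b, f c ≤ 0 ∧ ∀ t ∈ Ico a c, 0 < f t := by
  set S := {t ∈ Icc a b | f t ≤ 0}
  have hbdd : BddBelow S := ⟨a, fun t ht ↦ ht.1.1⟩
  have hc : sInf S ∈ S := (hf.preimage_isClosed_of_isClosed isClosed_Icc isClosed_Iic).csInf_mem
    ⟨b, ⟨hab, le_rfl⟩, hb⟩ hbdd
  refine ⟨sInf S, ⟨hc.1.1.lt_of_ne ?_, hc.1.2⟩, hc.2, fun t ht ↦ ?_⟩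
  · intro hac
    exact ha.not_ge (hac ▸ hc.2)
  · by_contra! hft
    exact (csInf_le hbdd ⟨⟨ht.1, ht.2.le.trans hc.1.2⟩, hft⟩).not_gt ht.2

lemma exists_mem_Ioo_eq_of_tendsto_atTop {f : ℝ → ℝ} {a b y : ℝ} (hab : a < b)
    (hf : ContinuousOn f (Ico a b)) (hlim : Tendsto f (𝓝[<] b) atTop) (hy : f a < y) :
    ∃ c ∈ Ioo a b, f c = y := by
  obtain ⟨t, hyt, ht⟩ := ((hlim.eventually_gt_atTop y).and (Ioo_mem_nhdsLT hab)).exists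
  obtain ⟨c, hc, hfc⟩ :=
    intermediate_value_Ioo ht.1.le (hf.mono (Icc_subset_Ico_right ht.2)) ⟨hy, hyt⟩
  exact ⟨c, ⟨hc.1, hc.2.trans ht.2⟩, hfc⟩

lemma exists_mem_Ioo_lt_of_tendsto_atTop {f g : ℝ → ℝ} {a b : ℝ} (hab : a < b)
    (hf : ContinuousAt f b) (hg : Tendsto g (𝓝[<] b) atTop) : ∃ t ∈ Ioo a b, f t < g t := by
  have hf_lt : ∀ᶠ t in 𝓝[<] b, f t < f b + 1 :=
    (hf.tendsto.mono_left nhdsWithin_le_nhds).eventually_lt_const (lt_add_one _)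
  obtain ⟨t, hft, hgt, ht⟩ :=
    (hf_lt.and ((hg.eventually_gt_atTop (f b + 1)).and (Ioo_mem_nhdsLT hab))).exists
  exact ⟨t, ht, hft.trans hgt⟩

namespace PainleveI

def IsSolOn (c : ℝ) (y y' : ℝ → ℝ) (s : Set ℝ) : Prop :=
  ∀ x ∈ s, HasDerivAt y (y' x) x ∧ HasDerivAt y' (6 * y x ^ 2 - (x + c)) x

def energy (c : ℝ) (y y' : ℝ → ℝ) (x : ℝ) : ℝ :=
  y' x ^ 2 - 4 * y x ^ 3 + 2 * (x + c) * y x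

variable {a b c d x : ℝ} {y y' u u' v v' : ℝ → ℝ} {s t : Set ℝ}

lemma isSolOn_zero_iff : IsSolOn 0 y y' s ↔
    ∀ x ∈ s, HasDerivAt y (y' x) x ∧ HasDerivAt y' (6 * y x ^ 2 - x) x := by
  simp only [IsSolOn, add_zero]

lemma IsSolOn.mono (h : IsSolOn c y y' s) (hts : t ⊆ s) : IsSolOn c y y' t :=
  fun x hx ↦ h x (hts hx)

lemma IsSolOn.continuousOn (h : IsSolOn c y y' s) : ContinuousOn y s :=
  fun x hx ↦ (h x hx).1.continuousAt.continuousWithinAt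

lemma IsSolOn.continuousOn_deriv (h : IsSolOn c y y' s) : ContinuousOn y' s :=
  fun x hx ↦ (h x hx).2.continuousAt.continuousWithinAt

lemma IsSolOn.comp_add_const (h : IsSolOn c y y' s) (d : ℝ) :
    IsSolOn (c + d) (fun x ↦ y (x + d)) (fun x ↦ y' (x + d)) ((· + d) ⁻¹' s) := by
  intro x hx
  obtain ⟨hy, hy'⟩ := h (x + d) hx
  exact ⟨hy.comp_add_const x d, (hy'.comp_add_const x d).congr_deriv (by ring)⟩

lemma IsSolOn.monotoneOn_deriv (h : IsSolOn c y y' s) (hs : Convex ℝ s)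
    (hneg : ∀ x ∈ interior s, x + c ≤ 0) : MonotoneOn y' s :=
  monotoneOn_of_forall_hasDerivAt hs (fun x hx ↦ (h x hx).2) fun x hx ↦ by
    nlinarith [hneg x hx, sq_nonneg (y x)]

lemma IsSolOn.deriv_nonneg (h : IsSolOn c y y' (Ico a b)) (hbc : b + c ≤ 0) (ha : 0 ≤ y' a) :
    ∀ x ∈ Ico a b, 0 ≤ y' x := by
  have hmono := h.monotoneOn_deriv (convex_Ico a b) fun x hx ↦ by
    rw [interior_Ico] at hx
    linarith [hx.2]
  exact fun x hx ↦ ha.trans (hmono ⟨le_rfl, hx.1.trans_lt hx.2⟩ hx hx.1)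

lemma IsSolOn.hasDerivAt_energy (h : IsSolOn c y y' s) (hx : x ∈ s) :
    HasDerivAt (energy c y y') (2 * y x) x := by
  obtain ⟨hy, hy'⟩ := h x hx
  have := ((hy'.pow 2).sub ((hy.pow 3).const_mul 4)).add
    ((((hasDerivAt_id x).add_const c).const_mul 2).mul hy)
  exact this.congr_deriv (by simp only [id_eq]; ring)

lemma energy_sub_monotoneOn (hu : IsSolOn c u u' s) (hv : IsSolOn d v v' s) (hs : Convex ℝ s)
    (hvu : ∀ x ∈ interior s, v x ≤ u x) :
    MonotoneOn (fun x ↦ energy c u u' x - energy d v v' x) s :=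
  monotoneOn_of_forall_hasDerivAt hs
    (fun x hx ↦ (hu.hasDerivAt_energy hx).sub (hv.hasDerivAt_energy hx))
    fun x hx ↦ by linarith [hvu x hx]

lemma IsSolOn.energy_sub_le {Y : ℝ} (h : IsSolOn c y y' (Icc a b)) (hab : a ≤ b)
    (hY : ∀ x ∈ Ioo a b, y x ≤ Y) :
    energy c y y' b - energy c y y' a ≤ 2 * Y * (b - a) := by
  have hmono : MonotoneOn (fun x ↦ 2 * Y * x - energy c y y' x) (Icc a b) :=
    monotoneOn_of_forall_hasDerivAt (convex_Icc a b)
      (fun x hx ↦ ((hasDerivAt_id x).const_mul (2 * Y)).sub (h.hasDerivAt_energy hx))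
      fun x hx ↦ by
        rw [interior_Icc] at hx
        linarith [hY x hx]
  have := hmono (left_mem_Icc.2 hab) (right_mem_Icc.2 hab) hab
  simp only at this
  linarith

lemma deriv_lt_of_forall_Ico_deriv_lt (hb : b ≤ 0) (hd : 0 ≤ d) (hab : a < b)
    (hu : IsSolOn 0 u u' (Icc a b)) (hv : IsSolOn d v v' (Icc a b))
    (hv' : ∀ x ∈ Icc a b, 0 ≤ v' x) (heq : u a = v a) (hlt : ∀ x ∈ Ico a b, v' x < u' x) :
    v' b < u' b := by
  have ha : a ∈ Icc a b := left_mem_Icc.2 hab.le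
  have hb' : b ∈ Icc a b := right_mem_Icc.2 hab.le
  have hlt_a := hlt a ⟨le_rfl, hab⟩
  have hvu : ∀ x ∈ Icc a b, v x ≤ u x := by
    have hmono : MonotoneOn (fun x ↦ u x - v x) (Icc a b) :=
      monotoneOn_of_forall_hasDerivAt (convex_Icc a b) (fun x hx ↦ (hu x hx).1.sub (hv x hx).1)
        fun x hx ↦ by
          rw [interior_Icc] at hx
          linarith [hlt x ⟨hx.1.le, hx.2⟩]
    intro x hx
    linarith [hmono ha hx hx.1]
  have hE := energy_sub_monotoneOn hu hv (convex_Icc a b)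
    (fun x hx ↦ hvu x (interior_subset hx)) ha hb' hab.le
  have hv_mono : v a ≤ v b := monotoneOn_of_forall_hasDerivAt (convex_Icc a b)
    (fun x hx ↦ (hv x hx).1) (fun x hx ↦ hv' x (interior_subset hx)) ha hb' hab.le
  have hu'_mono : u' a ≤ u' b := hu.monotoneOn_deriv (convex_Icc a b) (fun x hx ↦ by
    rw [interior_Icc] at hx
    linarith [hx.2]) ha hb' hab.le
  have hcube : v b ^ 3 ≤ u b ^ 3 := (Odd.strictMono_pow (by decide)).monotone (hvu b hb')
  have hsq : v' b ^ 2 < u' b ^ 2 := by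
    simp only [energy, heq] at hE
    nlinarith [mul_pos (sub_pos.2 hlt_a) (add_pos_of_nonneg_of_pos (hv' a ha)
      ((hv' a ha).trans_lt hlt_a)), mul_nonneg (neg_nonneg.2 hb) (sub_nonneg.2 (hvu b hb')),
      mul_nonneg hd (sub_nonneg.2 hv_mono), hcube]
  exact lt_of_abs_lt (abs_lt_of_sq_lt_sq hsq (by linarith [hv' a ha, hu'_mono]))

theorem lt_of_deriv_lt (hb : b ≤ 0) (hd : 0 ≤ d) (hu : IsSolOn 0 u u' (Ico a b))
    (hv : IsSolOn d v v' (Ico a b)) (hv' : ∀ x ∈ Ico a b, 0 ≤ v' x) (heq : u a = v a)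
    (hlt : v' a < u' a) : ∀ x ∈ Ioo a b, v x < u x := by
  have hslope : ∀ x ∈ Ico a b, v' x < u' x := by
    by_contra! ⟨x, hx, hux⟩
    have hsub : Icc a x ⊆ Ico a b := Icc_subset_Ico_right hx.2
    obtain ⟨c, hc, hc_le, hc_pos⟩ := exists_first_nonpos hx.1
      ((hu.continuousOn_deriv.sub hv.continuousOn_deriv).mono hsub) (sub_pos.2 hlt)
      (sub_nonpos.2 hux)
    have hsub' : Icc a c ⊆ Ico a b := (Icc_subset_Icc_right hc.2).trans hsub
    have := deriv_lt_of_forall_Ico_deriv_lt (by linarith [hc.2, hx.2]) hd hc.1 (hu.mono hsub')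
      (hv.mono hsub') (fun t ht ↦ hv' t (hsub' ht)) heq fun t ht ↦ sub_pos.1 (hc_pos t ht)
    linarith [show u' c - v' c ≤ 0 from hc_le]
  have hmono : StrictMonoOn (fun x ↦ u x - v x) (Ico a b) :=
    strictMonoOn_of_forall_hasDerivAt (convex_Ico a b) (fun x hx ↦ (hu x hx).1.sub (hv x hx).1)
      fun x hx ↦ by
        rw [interior_Ico] at hx
        linarith [hslope x ⟨hx.1.le, hx.2⟩]
  intro x hx
  linarith [hmono ⟨le_rfl, hx.1.trans hx.2⟩ ⟨hx.1.le, hx.2⟩ hx.1]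

lemma deriv_lt_of_apply_eq {x₀ σ : ℝ} {y₁ y₁' y₂ y₂' : ℝ → ℝ} (hx₀x : x₀ ≤ x) (hxσ : x ≤ σ)
    (h₁ : IsSolOn 0 y₁ y₁' (Icc x₀ σ)) (h₂ : IsSolOn 0 y₂ y₂' (Icc x₀ x))
    (hv : y₁ x₀ = y₂ x₀) (hs₁ : 0 ≤ y₁' x₀) (hs : y₁' x₀ < y₂' x₀)
    (h₁₂ : ∀ t ∈ Ioo x₀ x, y₁ t ≤ y₂ t) (hy₁' : ∀ t ∈ Icc x σ, 0 ≤ y₁' t) (hσ : y₁ σ = y₂ x)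
    (hy₂' : 0 ≤ y₂' x) : y₁' σ < y₂' x := by
  have hE₂₁ := energy_sub_monotoneOn h₂ (h₁.mono (Icc_subset_Icc_right hxσ)) (convex_Icc x₀ x)
    (fun t ht ↦ h₁₂ t (by rwa [interior_Icc] at ht)) (left_mem_Icc.2 hx₀x)
    (right_mem_Icc.2 hx₀x) hx₀x
  have hy₁_mono : MonotoneOn y₁ (Icc x σ) := monotoneOn_of_forall_hasDerivAt (convex_Icc x σ)
    (fun t ht ↦ (h₁ t ⟨hx₀x.trans ht.1, ht.2⟩).1) fun t ht ↦ hy₁' t (interior_subset ht)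
  have hE₁ := (h₁.mono (Icc_subset_Icc_left hx₀x)).energy_sub_le hxσ (Y := y₂ x) fun t ht ↦
    hσ ▸ hy₁_mono (Ioo_subset_Icc_self ht) (right_mem_Icc.2 hxσ) ht.2.le
  simp only [energy, hv, hσ] at hE₂₁ hE₁
  have hsq : y₁' σ ^ 2 < y₂' x ^ 2 := by
    nlinarith [mul_pos (sub_pos.2 hs) (add_pos_of_nonneg_of_pos hs₁ (hs₁.trans_lt hs))]
  exact lt_of_abs_lt (abs_lt_of_sq_lt_sq hsq hy₂')

lemma le_sub_of_apply_eq {a₁ b₁ a₂ b₂ σ : ℝ} {y₁ y₁' y₂ y₂' : ℝ → ℝ} (hb₁ : b₁ ≤ 0)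
    (h₁ : IsSolOn 0 y₁ y₁' (Ioo a₁ b₁)) (h₂ : IsSolOn 0 y₂ y₂' (Ioo a₂ b₂))
    (hblow₁ : Tendsto y₁ (𝓝[<] b₁) atTop) (hx : x ∈ Ioo a₂ b₂) (hxσ : x < σ)
    (hσ : σ ∈ Ioo a₁ b₁) (hy₁' : ∀ t ∈ Ico σ b₁, 0 ≤ y₁' t) (heq : y₁ σ = y₂ x)
    (hlt : y₁' σ < y₂' x) : b₂ ≤ b₁ - (σ - x) := by
  set d := σ - x
  set p := b₁ - d
  by_contra! hp
  have hxp : x < p := by linarith [hσ.2]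
  have hw : IsSolOn d (fun t ↦ y₁ (t + d)) (fun t ↦ y₁' (t + d)) (Ico x p) := by
    simpa using (h₁.comp_add_const d).mono fun t ht ↦
      show t + d ∈ Ioo a₁ b₁ from ⟨by linarith [hσ.1, ht.1], by linarith [ht.2]⟩
  have hbelow := lt_of_deriv_lt (by linarith) (by linarith) (h₂.mono fun t ht ↦
      ⟨hx.1.trans_le ht.1, ht.2.trans hp⟩) hw
    (fun t ht ↦ hy₁' (t + d) ⟨by linarith [ht.1], by linarith [ht.2]⟩)
    (by simp [d, heq]) (by simpa [d] using hlt)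
  have hshift : Tendsto (· + d) (𝓝[<] p) (𝓝[<] b₁) := by
    have hmap := Filter.map_add_right_nhdsLT (c := d) (a := p)
    rw [sub_add_cancel] at hmap
    exact hmap.le
  obtain ⟨t, ht, hlt'⟩ := exists_mem_Ioo_lt_of_tendsto_atTop hxp
    (h₂ p ⟨hx.1.trans hxp, hp⟩).1.continuousAt (hblow₁.comp hshift)
  exact (hbelow t ht).not_gt hlt'

end PainleveI

open PainleveI

theorem painleveI_right_comparison_general
    (a₁ b₁ a₂ b₂ x₀ y₀ : ℝ) (hb₁ : b₁ ≤ 0)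
    (y₁ y₁' y₂ y₂' : ℝ → ℝ)
    (h₁ : ∀ x ∈ Set.Ioo a₁ b₁,
      HasDerivAt y₁ (y₁' x) x ∧ HasDerivAt y₁' (6 * (y₁ x) ^ 2 - x) x)
    (h₂ : ∀ x ∈ Set.Ioo a₂ b₂,
      HasDerivAt y₂ (y₂' x) x ∧ HasDerivAt y₂' (6 * (y₂ x) ^ 2 - x) x)
    (hblow₁ : Tendsto y₁ (𝓝[<] b₁) atTop)
    (hx₀₁ : x₀ ∈ Set.Ioo a₁ b₁) (hx₀₂ : x₀ ∈ Set.Ioo a₂ b₂)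
    (hv₁ : y₁ x₀ = y₀) (hv₂ : y₂ x₀ = y₀)
    (hs₁ : 0 ≤ y₁' x₀) (hs : y₁' x₀ < y₂' x₀) :
    b₂ < b₁ ∧ ∀ x, x₀ < x → x < b₁ → x < b₂ → y₁ x < y₂ x := by
  replace h₁ := isSolOn_zero_iff.2 h₁
  replace h₂ := isSolOn_zero_iff.2 h₂
  set r := min b₁ b₂
  have hr : r ≤ 0 := (min_le_left _ _).trans hb₁
  have hsub₁ : Ico x₀ b₁ ⊆ Ioo a₁ b₁ := Ico_subset_Ioo_left hx₀₁.1
  have hsub₂ : Ico x₀ r ⊆ Ioo a₂ b₂ :=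
    (Ico_subset_Ico_right (min_le_right _ _)).trans (Ico_subset_Ioo_left hx₀₂.1)
  have hy₁' := (h₁.mono hsub₁).deriv_nonneg (by simpa using hb₁) hs₁
  have hy₂' := (h₂.mono hsub₂).deriv_nonneg (by simpa using hr) (hs₁.trans hs.le)
  have horder : ∀ x ∈ Ioo x₀ r, y₁ x < y₂ x :=
    lt_of_deriv_lt hr le_rfl (h₂.mono hsub₂)
      (h₁.mono ((Ico_subset_Ico_right (min_le_left _ _)).trans hsub₁))
      (fun x hx ↦ hy₁' x ⟨hx.1, hx.2.trans_le (min_le_left _ _)⟩) (hv₂.trans hv₁.symm) hs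
  refine ⟨?_, fun x hx hxb₁ hxb₂ ↦ horder x ⟨hx, lt_min hxb₁ hxb₂⟩⟩
  obtain ⟨x, hx⟩ := nonempty_Ioo.2 (lt_min hx₀₁.2 hx₀₂.2)
  have hxb₁ : x < b₁ := hx.2.trans_le (min_le_left _ _)
  obtain ⟨σ, hσ, hσx⟩ := exists_mem_Ioo_eq_of_tendsto_atTop hxb₁
    (h₁.continuousOn.mono (Ico_subset_Ioo_left (hx₀₁.1.trans hx.1))) hblow₁ (horder x hx)
  have hslope : y₁' σ < y₂' x := deriv_lt_of_apply_eq hx.1.le hσ.1.le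
    (h₁.mono fun t ht ↦ hsub₁ ⟨ht.1, ht.2.trans_lt hσ.2⟩)
    (h₂.mono fun t ht ↦ hsub₂ ⟨ht.1, ht.2.trans_lt hx.2⟩) (hv₁.trans hv₂.symm) hs₁ hs
    (fun t ht ↦ (horder t ⟨ht.1, ht.2.trans hx.2⟩).le)
    (fun t ht ↦ hy₁' t ⟨hx.1.le.trans ht.1, ht.2.trans_lt hσ.2⟩) hσx (hy₂' x ⟨hx.1.le, hx.2⟩)
  have := le_sub_of_apply_eq hb₁ h₁ h₂ hblow₁ (hsub₂ ⟨hx.1.le, hx.2⟩) hσ.1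
    (hsub₁ ⟨(hx.1.trans hσ.1).le, hσ.2⟩) (fun t ht ↦ hy₁' t ⟨(hx.1.trans hσ.1).le.trans ht.1, ht.2⟩)
    hσx hslope
  linarith [hσ.1]

/-- Comparison to the right for `y'' = 6y² - x` on intervals in `(-∞, 0]`:
if two solutions agree at `x₀` with slopes `y₂'(x₀) > y₁'(x₀) ≥ 0`, then
`y₂ > y₁` to the right of `x₀`, and the right blow-up point of `y₂` comes
strictly before that of `y₁`. -/
theorem painleveI_right_comparison
    (a₁ b₁ a₂ b₂ x₀ y₀ : ℝ) (hb₁ : b₁ ≤ 0) (hb₂ : b₂ ≤ 0)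
    (y₁ y₁' y₂ y₂' : ℝ → ℝ)
    (h₁ : ∀ x ∈ Set.Ioo a₁ b₁,
      HasDerivAt y₁ (y₁' x) x ∧ HasDerivAt y₁' (6 * (y₁ x) ^ 2 - x) x)
    (h₂ : ∀ x ∈ Set.Ioo a₂ b₂,
      HasDerivAt y₂ (y₂' x) x ∧ HasDerivAt y₂' (6 * (y₂ x) ^ 2 - x) x)
    (hblow₁ : Tendsto y₁ (𝓝[<] b₁) atTop)
    (hblow₂ : Tendsto y₂ (𝓝[<] b₂) atTop)
    (hx₀₁ : x₀ ∈ Set.Ioo a₁ b₁) (hx₀₂ : x₀ ∈ Set.Ioo a₂ b₂)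
    (hv₁ : y₁ x₀ = y₀) (hv₂ : y₂ x₀ = y₀)
    (hs₁ : 0 ≤ y₁' x₀) (hs : y₁' x₀ < y₂' x₀) :
    b₂ < b₁ ∧ ∀ x, x₀ < x → x < b₁ → x < b₂ → y₁ x < y₂ x :=
  painleveI_right_comparison_general a₁ b₁ a₂ b₂ x₀ y₀ hb₁ y₁ y₁' y₂ y₂' h₁ h₂ hblow₁ hx₀₁ hx₀₂ hv₁
    hv₂ hs₁ hs
end

section
/- Given x₀ ≤ 0 and real numbers y₀ > y_l, there exists exactly one real solution y of y'' = 6y² − x with y(x₀) = y₀ whose minimum value, achieved at a point x_min < x₀, equals y_l (i.e., y(x_min) = y_l and y'(x_min) = 0, and y_l is the minimum of y on [x_min, x₀]). -/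
/-!
For `x < 0` the equation gives `y'' = 6y² - x > 0`, so a solution with `y'(x_min) = 0` is strictly
increasing on `[x_min, x₀]` and can be parametrised by its level `w ∈ [y_l, y₀]`: for the inverse
function `g` and the slope `q = y' ∘ g` one has `g' = 1/q` and `(q²)' = 2 y''(g) = 12 w² - 2 g`.

If two solutions had slopes `q₁(y₀) > q₂(y₀)`, then below `y₀` the first one is the faster, so it
reaches each level later (`g₁ > g₂`); hence `(q₁² - q₂²)' = -2 (g₁ - g₂) < 0` and `q₁² - q₂²` stays
above its positive value at `y₀` all the way down to `y_l`, where both slopes vanish.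

Existence is a shooting argument in the slope `s = y'(x₀)`. Solving backwards from `(y₀, s)`, `y'`
decreases at rate at least `x₀ - x`, so it vanishes at some `x_min(s)` with `(x₀ - x_min)² ≤ 2s`.
The minimum value `y(x_min(s))` depends continuously on `s`, is close to `y₀` for small `s`, and
drops below `y_l` for large `s` by the energy inequality `(y'²/2 - 2y³ + x_min y)' ≤ 0`. To have
solutions on a fixed interval the field is truncated outside a box which the part of the
trajectory on `[x_min, x₀]` never leaves.
-/

open Filter Set Topology
open Function
open scoped NNReal

section Calculus

variable {f f' g g' : ℝ → ℝ} {a b : ℝ}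

lemma monotoneOn_Icc_of_hasDerivAt_nonneg (hc : ContinuousOn f (Icc a b))
    (hf : ∀ t ∈ Ioo a b, HasDerivAt f (f' t) t) (h : ∀ t ∈ Ioo a b, 0 ≤ f' t) :
    MonotoneOn f (Icc a b) :=
  monotoneOn_of_hasDerivWithinAt_nonneg (convex_Icc a b) hc
    (by simpa only [interior_Icc] using fun t ht => (hf t ht).hasDerivWithinAt)
    (by simpa only [interior_Icc] using h)

lemma antitoneOn_Icc_of_hasDerivAt_nonpos (hc : ContinuousOn f (Icc a b))
    (hf : ∀ t ∈ Ioo a b, HasDerivAt f (f' t) t) (h : ∀ t ∈ Ioo a b, f' t ≤ 0) :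
    AntitoneOn f (Icc a b) :=
  antitoneOn_of_hasDerivWithinAt_nonpos (convex_Icc a b) hc
    (by simpa only [interior_Icc] using fun t ht => (hf t ht).hasDerivWithinAt)
    (by simpa only [interior_Icc] using h)

lemma strictMonoOn_Icc_of_hasDerivAt_pos (hc : ContinuousOn f (Icc a b))
    (hf : ∀ t ∈ Ioo a b, HasDerivAt f (f' t) t) (h : ∀ t ∈ Ioo a b, 0 < f' t) :
    StrictMonoOn f (Icc a b) :=
  strictMonoOn_of_hasDerivWithinAt_pos (convex_Icc a b) hc
    (by simpa only [interior_Icc] using fun t ht => (hf t ht).hasDerivWithinAt)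
    (by simpa only [interior_Icc] using h)

lemma strictAntiOn_Icc_of_hasDerivAt_neg (hc : ContinuousOn f (Icc a b))
    (hf : ∀ t ∈ Ioo a b, HasDerivAt f (f' t) t) (h : ∀ t ∈ Ioo a b, f' t < 0) :
    StrictAntiOn f (Icc a b) :=
  strictAntiOn_of_hasDerivWithinAt_neg (convex_Icc a b) hc
    (by simpa only [interior_Icc] using fun t ht => (hf t ht).hasDerivWithinAt)
    (by simpa only [interior_Icc] using h)

lemma sub_le_sub_of_hasDerivAt_le (hab : a ≤ b) (hf : ∀ t ∈ Icc a b, HasDerivAt f (f' t) t)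
    (hg : ∀ t ∈ Icc a b, HasDerivAt g (g' t) t) (h : ∀ t ∈ Ioo a b, f' t ≤ g' t) :
    f b - f a ≤ g b - g a := by
  have hmono : MonotoneOn (fun t => g t - f t) (Icc a b) :=
    monotoneOn_Icc_of_hasDerivAt_nonneg
      (fun t ht => ((hg t ht).continuousAt.sub (hf t ht).continuousAt).continuousWithinAt)
      (fun t ht => (hg t (Ioo_subset_Icc_self ht)).sub (hf t (Ioo_subset_Icc_self ht)))
      (fun t ht => sub_nonneg.2 (h t ht))
  linarith [hmono (left_mem_Icc.2 hab) (right_mem_Icc.2 hab) hab]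

end Calculus

lemma StrictMonoOn.continuousOn_of_image_Icc {g : ℝ → ℝ} {a b c d : ℝ}
    (hg : StrictMonoOn g (Icc c d)) (himage : g '' Icc c d = Icc a b) :
    ContinuousOn g (Icc c d) := by
  intro w hw
  have hc : c ∈ Icc c d := left_mem_Icc.2 (hw.1.trans hw.2)
  have hd : d ∈ Icc c d := right_mem_Icc.2 (hw.1.trans hw.2)
  have hgw : g w ∈ Icc a b := himage ▸ mem_image_of_mem g hw
  have hgc : a ≤ g c := (himage ▸ mem_image_of_mem g hc : g c ∈ Icc a b).1
  have hgd : g d ≤ b := (himage ▸ mem_image_of_mem g hd : g d ∈ Icc a b).2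
  rw [← Icc_union_Icc_eq_Icc hw.1 hw.2]
  refine ContinuousWithinAt.union ?_ ?_
  · rcases hw.1.eq_or_lt with rfl | hcw
    · simpa only [Icc_self] using continuousWithinAt_singleton
    refine (continuousWithinAt_left_of_monotoneOn_of_image_mem_nhdsWithin hg.monotoneOn
      (Icc_mem_nhdsLE_of_mem ⟨hcw, hw.2⟩) ?_).mono Icc_subset_Iic_self
    rw [himage]
    exact Icc_mem_nhdsLE_of_mem ⟨hgc.trans_lt (hg hc hw hcw), hgw.2⟩
  · rcases hw.2.eq_or_lt with rfl | hwd
    · simpa only [Icc_self] using continuousWithinAt_singleton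
    refine (continuousWithinAt_right_of_monotoneOn_of_image_mem_nhdsWithin hg.monotoneOn
      (Icc_mem_nhdsGE_of_mem ⟨hw.1, hwd⟩) ?_).mono Icc_subset_Ici_self
    rw [himage]
    exact Icc_mem_nhdsGE_of_mem ⟨hgw.1, (hg hw hd hwd).trans_le hgd⟩

namespace StrictMonoOn

variable {f : ℝ → ℝ} {a b : ℝ}

lemma strictMonoOn_invFunOn_Icc (hf : StrictMonoOn f (Icc a b)) (hc : ContinuousOn f (Icc a b))
    (hab : a ≤ b) : StrictMonoOn (invFunOn f (Icc a b)) (Icc (f a) (f b)) := by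
  have hsurj := hc.surjOn_Icc (left_mem_Icc.2 hab) (right_mem_Icc.2 hab)
  intro v hv w hw hvw
  rw [← hf.lt_iff_lt (hsurj.mapsTo_invFunOn hv) (hsurj.mapsTo_invFunOn hw),
    hsurj.rightInvOn_invFunOn hv, hsurj.rightInvOn_invFunOn hw]
  exact hvw

lemma image_invFunOn_Icc (hf : StrictMonoOn f (Icc a b)) (hc : ContinuousOn f (Icc a b))
    (hab : a ≤ b) : invFunOn f (Icc a b) '' Icc (f a) (f b) = Icc a b := by
  have hsurj := hc.surjOn_Icc (left_mem_Icc.2 hab) (right_mem_Icc.2 hab)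
  rw [← hsurj.image_eq_of_mapsTo (fun x hx => ⟨hf.monotoneOn (left_mem_Icc.2 hab) hx hx.1,
    hf.monotoneOn hx (right_mem_Icc.2 hab) hx.2⟩)]
  exact hf.injOn.leftInvOn_invFunOn.image_image

lemma continuousOn_invFunOn_Icc (hf : StrictMonoOn f (Icc a b)) (hc : ContinuousOn f (Icc a b))
    (hab : a ≤ b) : ContinuousOn (invFunOn f (Icc a b)) (Icc (f a) (f b)) :=
  (hf.strictMonoOn_invFunOn_Icc hc hab).continuousOn_of_image_Icc (hf.image_invFunOn_Icc hc hab)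

lemma hasDerivAt_invFunOn_Icc (hf : StrictMonoOn f (Icc a b)) (hc : ContinuousOn f (Icc a b))
    (hab : a ≤ b) {w f' : ℝ} (hw : w ∈ Ioo (f a) (f b))
    (hf' : HasDerivAt f f' (invFunOn f (Icc a b) w)) (hne : f' ≠ 0) :
    HasDerivAt (invFunOn f (Icc a b)) f'⁻¹ w := by
  have hsurj := hc.surjOn_Icc (left_mem_Icc.2 hab) (right_mem_Icc.2 hab)
  have hnhds : Icc (f a) (f b) ∈ 𝓝 w := Icc_mem_nhds hw.1 hw.2
  exact hf'.of_local_left_inverse ((hf.continuousOn_invFunOn_Icc hc hab).continuousAt hnhds) hne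
    (eventually_of_mem hnhds fun v hv => hsurj.rightInvOn_invFunOn hv)

end StrictMonoOn

/-- `g w` is the time at which a solution of `y'' = φ(y)/2 - x` reaches the level `w`, and `q w`
its slope there. -/
structure IsLevelSolution (φ : ℝ → ℝ) (c d : ℝ) (g q : ℝ → ℝ) : Prop where
  continuousOn_time : ContinuousOn g (Icc c d)
  continuousOn_slope : ContinuousOn q (Icc c d)
  slope_left : q c = 0
  slope_pos : ∀ w ∈ Ioc c d, 0 < q w
  hasDerivAt_time : ∀ w ∈ Ioo c d, HasDerivAt g (q w)⁻¹ w
  hasDerivAt_slope_sq : ∀ w ∈ Ioo c d, HasDerivAt (fun v => q v ^ 2) (φ w - 2 * g w) w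

namespace IsLevelSolution

variable {φ g₁ q₁ g₂ q₂ : ℝ → ℝ} {c d : ℝ}

lemma strictAntiOn_slope_sq_sub (h₁ : IsLevelSolution φ c d g₁ q₁)
    (h₂ : IsLevelSolution φ c d g₂ q₂) (hgd : g₁ d = g₂ d) {w : ℝ} (hcw : c ≤ w) (hwd : w ≤ d)
    (hq : ∀ v ∈ Ioc w d, q₂ v < q₁ v) :
    StrictAntiOn (fun v => q₁ v ^ 2 - q₂ v ^ 2) (Icc w d) := by
  have hsub : Icc w d ⊆ Icc c d := Icc_subset_Icc hcw le_rfl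
  have hIoo : ∀ v ∈ Ioo w d, v ∈ Ioo c d := fun v hv => ⟨hcw.trans_lt hv.1, hv.2⟩
  have htime : StrictAntiOn (fun v => g₁ v - g₂ v) (Icc w d) :=
    strictAntiOn_Icc_of_hasDerivAt_neg
      ((h₁.continuousOn_time.sub h₂.continuousOn_time).mono hsub)
      (fun v hv => (h₁.hasDerivAt_time v (hIoo v hv)).sub (h₂.hasDerivAt_time v (hIoo v hv)))
      (fun v hv => sub_neg.2 (inv_strictAnti₀ (h₂.slope_pos v ⟨(hIoo v hv).1, hv.2.le⟩)
        (hq v ⟨hv.1, hv.2.le⟩)))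
  refine strictAntiOn_Icc_of_hasDerivAt_neg
    (((h₁.continuousOn_slope.pow 2).sub (h₂.continuousOn_slope.pow 2)).mono hsub)
    (fun v hv => (h₁.hasDerivAt_slope_sq v (hIoo v hv)).sub
      (h₂.hasDerivAt_slope_sq v (hIoo v hv))) fun v hv => ?_
  have := htime ⟨hv.1.le, hv.2.le⟩ (right_mem_Icc.2 hwd) hv.2
  simp only [hgd, sub_self] at this
  linarith

theorem slope_right_le (h₁ : IsLevelSolution φ c d g₁ q₁) (h₂ : IsLevelSolution φ c d g₂ q₂)
    (hcd : c < d) (hgd : g₁ d = g₂ d) : q₁ d ≤ q₂ d := by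
  by_contra! hlt
  set D : ℝ → ℝ := fun w => q₁ w ^ 2 - q₂ w ^ 2 with hD
  have hDcont : ContinuousOn D (Icc c d) :=
    (h₁.continuousOn_slope.pow 2).sub (h₂.continuousOn_slope.pow 2)
  have hq₂d := h₂.slope_pos d ⟨hcd, le_rfl⟩
  have hDd : 0 < D d := by simp only [hD]; nlinarith
  set Z := Icc c d ∩ D ⁻¹' Iic 0
  have hZ : IsCompact Z := isCompact_Icc.of_isClosed_subset
    (hDcont.preimage_isClosed_of_isClosed isClosed_Icc isClosed_Iic) inter_subset_left
  have hcZ : c ∈ Z := ⟨left_mem_Icc.2 hcd.le, by simp [hD, h₁.slope_left, h₂.slope_left]⟩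
  set w := sSup Z
  have hwZ : w ∈ Z := hZ.sSup_mem ⟨c, hcZ⟩
  have hDw : D w ≤ 0 := hwZ.2
  have hwd : w < d := hwZ.1.2.lt_of_ne fun h => by rw [h] at hDw; linarith
  have hq : ∀ v ∈ Ioc w d, q₂ v < q₁ v := by
    intro v hv
    have hDv : 0 < D v := by
      by_contra! hDv
      linarith [le_csSup hZ.bddAbove ⟨⟨hwZ.1.1.trans hv.1.le, hv.2⟩, hDv⟩, hv.1]
    have := h₁.slope_pos v ⟨hwZ.1.1.trans_lt hv.1, hv.2⟩
    have := h₂.slope_pos v ⟨hwZ.1.1.trans_lt hv.1, hv.2⟩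
    simp only [hD] at hDv
    nlinarith
  linarith [h₁.strictAntiOn_slope_sq_sub h₂ hgd hwZ.1.1 hwd.le hq (left_mem_Icc.2 hwd.le)
    (right_mem_Icc.2 hwd.le) hwd]

theorem slope_right_eq (h₁ : IsLevelSolution φ c d g₁ q₁) (h₂ : IsLevelSolution φ c d g₂ q₂)
    (hcd : c < d) (hgd : g₁ d = g₂ d) : q₁ d = q₂ d :=
  (h₁.slope_right_le h₂ hcd hgd).antisymm (h₂.slope_right_le h₁ hcd hgd.symm)

end IsLevelSolution

def SolvesPainleveIOn (y y' : ℝ → ℝ) (s : Set ℝ) : Prop :=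
  ∀ x ∈ s, HasDerivAt y (y' x) x ∧ HasDerivAt y' (6 * y x ^ 2 - x) x

namespace SolvesPainleveIOn

variable {y y' : ℝ → ℝ} {a b : ℝ}

lemma continuousOn (h : SolvesPainleveIOn y y' (Icc a b)) : ContinuousOn y (Icc a b) :=
  fun x hx => (h x hx).1.continuousAt.continuousWithinAt

lemma continuousOn_deriv (h : SolvesPainleveIOn y y' (Icc a b)) : ContinuousOn y' (Icc a b) :=
  fun x hx => (h x hx).2.continuousAt.continuousWithinAt

lemma strictMonoOn_deriv (h : SolvesPainleveIOn y y' (Icc a b)) (hb : b ≤ 0) :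
    StrictMonoOn y' (Icc a b) :=
  strictMonoOn_Icc_of_hasDerivAt_pos h.continuousOn_deriv
    (fun x hx => (h x (Ioo_subset_Icc_self hx)).2)
    (fun x hx => by nlinarith [sq_nonneg (y x), hx.2])

lemma deriv_pos (h : SolvesPainleveIOn y y' (Icc a b)) (hb : b ≤ 0) (ha : y' a = 0)
    {x : ℝ} (hx : x ∈ Ioc a b) : 0 < y' x :=
  ha ▸ h.strictMonoOn_deriv hb (left_mem_Icc.2 (hx.1.le.trans hx.2)) (Ioc_subset_Icc_self hx) hx.1

lemma strictMonoOn (h : SolvesPainleveIOn y y' (Icc a b)) (hb : b ≤ 0) (ha : y' a = 0) :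
    StrictMonoOn y (Icc a b) :=
  strictMonoOn_Icc_of_hasDerivAt_pos h.continuousOn
    (fun x hx => (h x (Ioo_subset_Icc_self hx)).1)
    (fun _ hx => h.deriv_pos hb ha ⟨hx.1, hx.2.le⟩)

theorem isLevelSolution (h : SolvesPainleveIOn y y' (Icc a b)) (hb : b ≤ 0) (hab : a ≤ b)
    (ha : y' a = 0) :
    IsLevelSolution (fun w => 12 * w ^ 2) (y a) (y b) (invFunOn y (Icc a b))
      (y' ∘ invFunOn y (Icc a b)) := by
  have hmono := h.strictMonoOn hb ha
  have hsurj := h.continuousOn.surjOn_Icc (left_mem_Icc.2 hab) (right_mem_Icc.2 hab)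
  have hleft : invFunOn y (Icc a b) (y a) = a :=
    hmono.injOn.leftInvOn_invFunOn (left_mem_Icc.2 hab)
  have hpos : ∀ w ∈ Ioc (y a) (y b), 0 < y' (invFunOn y (Icc a b) w) := by
    intro w hw
    have hlt := hmono.strictMonoOn_invFunOn_Icc h.continuousOn hab
      (left_mem_Icc.2 (hw.1.le.trans hw.2)) (Ioc_subset_Icc_self hw) hw.1
    rw [hleft] at hlt
    exact h.deriv_pos hb ha ⟨hlt, (hsurj.mapsTo_invFunOn (Ioc_subset_Icc_self hw)).2⟩
  have htime : ∀ w ∈ Ioo (y a) (y b),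
      HasDerivAt (invFunOn y (Icc a b)) (y' (invFunOn y (Icc a b) w))⁻¹ w := fun w hw =>
    hmono.hasDerivAt_invFunOn_Icc h.continuousOn hab hw
      (h _ (hsurj.mapsTo_invFunOn (Ioo_subset_Icc_self hw))).1 (hpos w ⟨hw.1, hw.2.le⟩).ne'
  refine ⟨hmono.continuousOn_invFunOn_Icc h.continuousOn hab,
    h.continuousOn_deriv.comp (hmono.continuousOn_invFunOn_Icc h.continuousOn hab)
      hsurj.mapsTo_invFunOn, by simp only [comp_apply, hleft, ha], hpos, htime, fun w hw => ?_⟩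
  have hw' := Ioo_subset_Icc_self hw
  refine (((h _ (hsurj.mapsTo_invFunOn hw')).2.comp w (htime w hw)).pow 2).congr_deriv ?_
  have hne := (hpos w ⟨hw.1, hw.2.le⟩).ne'
  rw [comp_apply, hsurj.rightInvOn_invFunOn hw']
  field_simp
  ring

lemma sub_deriv_mul_le (h : SolvesPainleveIOn y y' (Icc a b)) (hb : b ≤ 0) (hab : a ≤ b) :
    y b - y' b * (b - a) ≤ y a := by
  have := sub_le_sub_of_hasDerivAt_le hab (fun u hu => (h u hu).1)
    (fun u _ => (hasDerivAt_id' u).const_mul (y' b))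
    (fun u hu => by
      rw [mul_one]
      exact (h.strictMonoOn_deriv hb).monotoneOn (Ioo_subset_Icc_self hu) (right_mem_Icc.2 hab)
        hu.2.le)
  linarith

lemma deriv_sq_div_two_le (h : SolvesPainleveIOn y y' (Icc a b)) (hb : b ≤ 0) (hab : a ≤ b)
    (ha : y' a = 0) : y' b ^ 2 / 2 ≤ 2 * (y b ^ 3 - y a ^ 3) - a * (y b - y a) := by
  have := sub_le_sub_of_hasDerivAt_le hab (f := fun x => y' x ^ 2 / 2)
    (g := fun x => 2 * y x ^ 3 - a * y x)
    (fun u hu => ((h u hu).2.fun_pow 2).div_const 2)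
    (fun u hu => (((h u hu).1.fun_pow 3).const_mul 2).sub ((h u hu).1.const_mul a))
    (fun u hu => by
      have := h.deriv_pos hb ha ⟨hu.1, hu.2.le⟩
      simp only [Nat.cast_ofNat]
      nlinarith [hu.1])
  simp only [ha] at this
  linarith

end SolvesPainleveIOn

theorem SolvesPainleveIOn.deriv_right_eq {y₁ y₁' y₂ y₂' : ℝ → ℝ} {a₁ a₂ b : ℝ}
    (h₁ : SolvesPainleveIOn y₁ y₁' (Icc a₁ b)) (h₂ : SolvesPainleveIOn y₂ y₂' (Icc a₂ b))
    (hb : b ≤ 0) (ha₁ : a₁ < b) (ha₂ : a₂ < b) (h₁0 : y₁' a₁ = 0) (h₂0 : y₂' a₂ = 0)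
    (hya : y₁ a₁ = y₂ a₂) (hyb : y₁ b = y₂ b) : y₁' b = y₂' b := by
  have hmono₁ := h₁.strictMonoOn hb h₁0
  have L₂ := h₂.isLevelSolution hb ha₂.le h₂0
  rw [← hya, ← hyb] at L₂
  have hr₁ : invFunOn y₁ (Icc a₁ b) (y₁ b) = b :=
    hmono₁.injOn.leftInvOn_invFunOn (right_mem_Icc.2 ha₁.le)
  have hr₂ : invFunOn y₂ (Icc a₂ b) (y₁ b) = b :=
    hyb ▸ (h₂.strictMonoOn hb h₂0).injOn.leftInvOn_invFunOn (right_mem_Icc.2 ha₂.le)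
  have := (h₁.isLevelSolution hb ha₁.le h₁0).slope_right_eq L₂
    (hmono₁ (left_mem_Icc.2 ha₁.le) (right_mem_Icc.2 ha₁.le) ha₁) (hr₁.trans hr₂.symm)
  simpa only [comp_apply, hr₁, hr₂] using this

theorem IsPicardLindelof.of_lipschitzWith_of_norm_le {E : Type*} [NormedAddCommGroup E]
    {f : ℝ → E → E} {tmin tmax : ℝ} (t₀ : Icc tmin tmax) (x₀ : E) (r : ℝ≥0) {L K : ℝ≥0}
    (hlip : ∀ t ∈ Icc tmin tmax, LipschitzWith K (f t))
    (hcont : ∀ x, ContinuousOn (f · x) (Icc tmin tmax))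
    (hnorm : ∀ t ∈ Icc tmin tmax, ∀ x, ‖f t x‖ ≤ L) :
    IsPicardLindelof f t₀ x₀ (r + L * (tmax - tmin).toNNReal) r L K where
  lipschitzOnWith t ht := (hlip t ht).lipschitzOnWith
  continuousOn x _ := hcont x
  norm_le t ht x _ := hnorm t ht x
  mul_max_le := by
    rw [NNReal.coe_add, add_sub_cancel_left, NNReal.coe_mul,
      Real.coe_toNNReal _ (by linarith [t₀.2.1, t₀.2.2])]
    gcongr
    exact max_le (by linarith [t₀.2.1]) (by linarith [t₀.2.2])

def clip (M x : ℝ) : ℝ := max (-M) (min M x)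

section clip

variable {M x : ℝ}

lemma abs_clip_le (hM : 0 ≤ M) : |clip M x| ≤ M := by
  rw [clip, abs_le]; constructor <;> simp [hM]

lemma clip_of_abs_le (h : |x| ≤ M) : clip M x = x := by
  rw [clip, min_eq_right (abs_le.1 h).2, max_eq_right (abs_le.1 h).1]

lemma clip_nonneg (hM : 0 ≤ M) (hx : 0 ≤ x) : 0 ≤ clip M x := le_max_of_le_right (le_min hM hx)

lemma clip_nonpos (hM : 0 ≤ M) (hx : x ≤ 0) : clip M x ≤ 0 :=
  max_le (neg_nonpos.2 hM) (min_le_of_right_le hx)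

lemma lipschitzWith_clip : LipschitzWith 1 (clip M) :=
  (LipschitzWith.id.const_min M).const_max (-M)

end clip

def truncatedPainleveField (M t : ℝ) (z : ℝ × ℝ) : ℝ × ℝ := (clip M z.2, 6 * clip M z.1 ^ 2 - t)

section truncatedPainleveField

variable {M : ℝ}

lemma lipschitzWith_truncatedPainleveField (hM : 0 ≤ M) (t : ℝ) :
    LipschitzWith (12 * M + 1).toNNReal (truncatedPainleveField M t) := by
  refine LipschitzWith.of_dist_le_mul fun z w => ?_
  rw [Real.coe_toNNReal _ (by positivity)]
  simp only [truncatedPainleveField, Prod.dist_eq, Real.dist_eq]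
  have hclip : ∀ u v : ℝ, |clip M u - clip M v| ≤ |u - v| := fun u v => by
    simpa [Real.dist_eq] using lipschitzWith_clip.dist_le_mul u v
  have hsq : |6 * clip M z.1 ^ 2 - t - (6 * clip M w.1 ^ 2 - t)| ≤ 12 * M * |z.1 - w.1| := by
    have hsum : |clip M z.1 + clip M w.1| ≤ 2 * M :=
      (abs_add_le _ _).trans (by linarith [abs_clip_le (x := z.1) hM, abs_clip_le (x := w.1) hM])
    calc |6 * clip M z.1 ^ 2 - t - (6 * clip M w.1 ^ 2 - t)|
        = 6 * (|clip M z.1 + clip M w.1| * |clip M z.1 - clip M w.1|) := by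
          rw [← abs_mul, show (6 : ℝ) = |6| by norm_num, ← abs_mul]; ring_nf
      _ ≤ 6 * (2 * M * |z.1 - w.1|) := by
          have := mul_le_mul hsum (hclip z.1 w.1) (abs_nonneg _) (by positivity)
          linarith
      _ = 12 * M * |z.1 - w.1| := by ring
  have hd1 := le_max_left |z.1 - w.1| |z.2 - w.2|
  have hd2 := le_max_right |z.1 - w.1| |z.2 - w.2|
  refine max_le ((hclip _ _).trans ?_) (hsq.trans ?_) <;> nlinarith [abs_nonneg (z.1 - w.1)]

lemma norm_truncatedPainleveField_le (hM : 0 ≤ M) (t : ℝ) (z : ℝ × ℝ) :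
    ‖truncatedPainleveField M t z‖ ≤ M + 6 * M ^ 2 + |t| := by
  have h1 := abs_clip_le (x := z.1) hM
  have h2 := abs_clip_le (x := z.2) hM
  have h3 : clip M z.1 ^ 2 ≤ M ^ 2 := by rw [← sq_abs]; gcongr
  rw [truncatedPainleveField, Prod.norm_mk, Real.norm_eq_abs, Real.norm_eq_abs]
  refine max_le (by nlinarith [abs_nonneg t]) ((abs_sub _ _).trans ?_)
  rw [abs_of_nonneg (by positivity)]
  nlinarith

end truncatedPainleveField

theorem exists_truncatedPainleveField_flow (x₀ y₀ : ℝ) {S T M : ℝ} (hT : 0 ≤ T) (hM : 0 ≤ M) :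
    ∃ Y : ℝ → ℝ → ℝ × ℝ, (∀ s ∈ Icc 0 S, Y s x₀ = (y₀, s) ∧
      ∀ t ∈ Icc (x₀ - T) x₀, HasDerivAt (Y s) (truncatedPainleveField M t (Y s t)) t) ∧
      ∃ K : ℝ≥0, ∀ t ∈ Icc (x₀ - T) x₀, LipschitzOnWith K (Y · t) (Icc 0 S) := by
  have hPL := IsPicardLindelof.of_lipschitzWith_of_norm_le (f := truncatedPainleveField M)
    (tmin := x₀ - T - 1) (tmax := x₀ + 1) ⟨x₀, by constructor <;> linarith⟩ (y₀, 0) S.toNNReal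
    (L := (M + 6 * M ^ 2 + |x₀| + T + 1).toNNReal)
    (fun t _ => lipschitzWith_truncatedPainleveField hM t)
    (fun z => by unfold truncatedPainleveField; fun_prop)
    (fun t ht z => (norm_truncatedPainleveField_le hM t z).trans <| by
      rw [Real.coe_toNNReal _ (by positivity)]
      have : |t| ≤ |x₀| + T + 1 :=
        abs_le.2 ⟨by linarith [neg_abs_le x₀, ht.1], by linarith [le_abs_self x₀, ht.2]⟩
      linarith)
  obtain ⟨α, hα, K, hK⟩ := hPL.exists_forall_mem_closedBall_eq_hasDerivWithinAt_lipschitzOnWith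
  have hball : MapsTo (fun s => (y₀, s)) (Icc 0 S) (Metric.closedBall (y₀, 0) S.toNNReal) :=
    fun s hs => by
      rw [Metric.mem_closedBall, Prod.dist_eq, dist_self, Real.dist_eq, sub_zero,
        abs_of_nonneg hs.1, Real.coe_toNNReal _ (hs.1.trans hs.2)]
      exact max_le (hs.1.trans hs.2) hs.2
  refine ⟨fun s => α (y₀, s), fun s hs => ⟨(hα _ (hball hs)).1, fun t ht => ?_⟩, _,
    fun t ht => (hK t ⟨by linarith [ht.1], by linarith [ht.2]⟩).comp
      ((LipschitzWith.const y₀).prodMk LipschitzWith.id).lipschitzOnWith hball⟩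
  exact ((hα _ (hball hs)).2 t ⟨by linarith [ht.1], by linarith [ht.2]⟩).hasDerivAt
    (Icc_mem_nhds (by linarith [ht.1]) (by linarith [ht.2]))

lemma HasDerivAt.fst {f : ℝ → ℝ × ℝ} {f' : ℝ × ℝ} {t : ℝ} (h : HasDerivAt f f' t) :
    HasDerivAt (fun s => (f s).1) f'.1 t := by
  simpa using h.hasFDerivAt.fst.hasDerivAt

lemma HasDerivAt.snd {f : ℝ → ℝ × ℝ} {f' : ℝ × ℝ} {t : ℝ} (h : HasDerivAt f f' t) :
    HasDerivAt (fun s => (f s).2) f'.2 t := by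
  simpa using h.hasFDerivAt.snd.hasDerivAt

def SolvesTruncatedPainleveIOn (M : ℝ) (y y' : ℝ → ℝ) (s : Set ℝ) : Prop :=
  ∀ x ∈ s, HasDerivAt y (clip M (y' x)) x ∧ HasDerivAt y' (6 * clip M (y x) ^ 2 - x) x

lemma solvesTruncatedPainleveIOn_of_hasDerivAt {M : ℝ} {Y : ℝ → ℝ × ℝ} {s : Set ℝ}
    (h : ∀ t ∈ s, HasDerivAt Y (truncatedPainleveField M t (Y t)) t) :
    SolvesTruncatedPainleveIOn M (fun t => (Y t).1) (fun t => (Y t).2) s :=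
  fun t ht => ⟨(h t ht).fst, (h t ht).snd⟩

namespace SolvesTruncatedPainleveIOn

variable {M a b xm : ℝ} {y y' : ℝ → ℝ}

lemma continuousOn (h : SolvesTruncatedPainleveIOn M y y' (Icc a b)) :
    ContinuousOn y (Icc a b) :=
  fun x hx => (h x hx).1.continuousAt.continuousWithinAt

lemma continuousOn_deriv (h : SolvesTruncatedPainleveIOn M y y' (Icc a b)) :
    ContinuousOn y' (Icc a b) :=
  fun x hx => (h x hx).2.continuousAt.continuousWithinAt

lemma monotoneOn_deriv (h : SolvesTruncatedPainleveIOn M y y' (Icc a b)) (hb : b ≤ 0) :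
    MonotoneOn y' (Icc a b) :=
  monotoneOn_Icc_of_hasDerivAt_nonneg h.continuousOn_deriv
    (fun x hx => (h x (Ioo_subset_Icc_self hx)).2)
    (fun x hx => by nlinarith [sq_nonneg (clip M (y x)), hx.2])

lemma deriv_add_sq_div_two_le (h : SolvesTruncatedPainleveIOn M y y' (Icc a b)) (hb : b ≤ 0)
    {x : ℝ} (hx : x ∈ Icc a b) : y' x + (b - x) ^ 2 / 2 ≤ y' b := by
  have key := sub_le_sub_of_hasDerivAt_le hx.2 (f := fun u => -(b - u) ^ 2 / 2)
    (f' := fun u => b - u)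
    (fun u _ => ((((hasDerivAt_id' u).const_sub b).fun_pow 2).fun_neg.div_const 2).congr_deriv
      (by simp))
    (fun u hu => (h u ⟨hx.1.trans hu.1, hu.2⟩).2)
    (fun u hu => by nlinarith [sq_nonneg (clip M (y u))])
  simp only [sub_self] at key
  linarith

lemma exists_deriv_eq_zero (h : SolvesTruncatedPainleveIOn M y y' (Icc a b)) (hb : b ≤ 0)
    (hab : a ≤ b) (hpos : 0 < y' b) (hlong : 2 * y' b < (b - a) ^ 2) :
    ∃ xm ∈ Ioo a b, y' xm = 0 := by
  have hya := h.deriv_add_sq_div_two_le hb (left_mem_Icc.2 hab)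
  obtain ⟨xm, hxm, hzero⟩ := intermediate_value_Icc hab h.continuousOn_deriv
    ⟨by linarith, hpos.le⟩
  refine ⟨xm, ⟨hxm.1.lt_of_ne ?_, hxm.2.lt_of_ne ?_⟩, hzero⟩
  · rintro rfl; linarith
  · rintro rfl; linarith

lemma isMinOn (h : SolvesTruncatedPainleveIOn M y y' (Icc a b)) (hM : 0 ≤ M) (hb : b ≤ 0)
    (hxm : xm ∈ Icc a b) (h0 : y' xm = 0) : IsMinOn y (Icc a b) xm := by
  have hmono := h.monotoneOn_deriv hb
  refine isMinOn_iff.2 fun x hx => ?_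
  rcases le_total x xm with hx' | hx'
  · refine antitoneOn_Icc_of_hasDerivAt_nonpos (h.continuousOn.mono (Icc_subset_Icc le_rfl hxm.2))
      (fun t ht => (h t ⟨ht.1.le, ht.2.le.trans hxm.2⟩).1) (fun t ht => clip_nonpos hM ?_)
      ⟨hx.1, hx'⟩ (right_mem_Icc.2 hxm.1) hx'
    exact h0 ▸ hmono ⟨ht.1.le, ht.2.le.trans hxm.2⟩ hxm ht.2.le
  · refine monotoneOn_Icc_of_hasDerivAt_nonneg (h.continuousOn.mono (Icc_subset_Icc hxm.1 le_rfl))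
      (fun t ht => (h t ⟨hxm.1.trans ht.1.le, ht.2.le⟩).1) (fun t ht => clip_nonneg hM ?_)
      (left_mem_Icc.2 hxm.2) ⟨hx', hx.2⟩ hx'
    exact h0 ▸ hmono hxm ⟨hxm.1.trans ht.1.le, ht.2.le⟩ ht.1.le

lemma solvesPainleveIOn (h : SolvesTruncatedPainleveIOn M y y' (Icc a b)) (hb : b ≤ 0)
    (hxm : xm ∈ Icc a b) (h0 : y' xm = 0) (hM : y' b ≤ M) (hyM : |y b| + y' b * (b - a) ≤ M) :
    SolvesPainleveIOn y y' (Icc xm b) := by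
  have hsub : Icc xm b ⊆ Icc a b := Icc_subset_Icc hxm.1 le_rfl
  have hderiv : ∀ x ∈ Icc xm b, 0 ≤ y' x ∧ y' x ≤ y' b := fun x hx =>
    ⟨h0 ▸ h.monotoneOn_deriv hb hxm (hsub hx) hx.1,
      h.monotoneOn_deriv hb (hsub hx) (right_mem_Icc.2 (hxm.1.trans hxm.2)) hx.2⟩
  have hclip_deriv : ∀ x ∈ Icc xm b, clip M (y' x) = y' x := fun x hx =>
    clip_of_abs_le (abs_le.2 ⟨by linarith [hderiv x hx, hderiv b (right_mem_Icc.2 hxm.2)],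
      (hderiv x hx).2.trans hM⟩)
  have hy : ∀ x ∈ Icc xm b, |y x| ≤ M := by
    intro x hx
    have hx' : Icc x b ⊆ Icc a b := Icc_subset_Icc (hxm.1.trans hx.1) le_rfl
    have hlow := sub_le_sub_of_hasDerivAt_le hx.2 (fun u hu => (h u (hx' hu)).1)
      (fun u _ => (hasDerivAt_id' u).const_mul (y' b))
      (fun u hu => by
        rw [hclip_deriv u ⟨hx.1.trans hu.1.le, hu.2.le⟩, mul_one]
        exact (hderiv u ⟨hx.1.trans hu.1.le, hu.2.le⟩).2)
    have hup := sub_le_sub_of_hasDerivAt_le hx.2 (fun u _ => hasDerivAt_const u (0 : ℝ))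
      (fun u hu => (h u (hx' hu)).1)
      (fun u hu => by
        rw [hclip_deriv u ⟨hx.1.trans hu.1.le, hu.2.le⟩]
        exact (hderiv u ⟨hx.1.trans hu.1.le, hu.2.le⟩).1)
    have := hderiv x hx
    rw [abs_le]
    constructor <;> nlinarith [neg_abs_le (y b), le_abs_self (y b), hxm.1, hx.1]
  exact fun x hx => ⟨hclip_deriv x hx ▸ (h x (hsub hx)).1,
    clip_of_abs_le (hy x hx) ▸ (h x (hsub hx)).2⟩

end SolvesTruncatedPainleveIOn

lemma IsMinOn.dist_le {α : Type*} {f g : α → ℝ} {s : Set α} {a b : α} {ε : ℝ}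
    (hf : IsMinOn f s a) (hg : IsMinOn g s b) (ha : a ∈ s) (hb : b ∈ s)
    (h : ∀ x ∈ s, dist (f x) (g x) ≤ ε) : dist (f a) (g b) ≤ ε := by
  have h₁ := abs_le.1 (h a ha)
  have h₂ := abs_le.1 (h b hb)
  rw [Real.dist_eq, abs_le]
  constructor <;> linarith [isMinOn_iff.1 hf b hb, isMinOn_iff.1 hg a ha]

theorem exists_shooting_family (x₀ y₀ : ℝ) (hx₀ : x₀ ≤ 0) {S : ℝ} (hS : 0 ≤ S) :
    ∃ (xm : ℝ → ℝ) (y y' : ℝ → ℝ → ℝ), ContinuousOn (fun s => y s (xm s)) (Ioc 0 S) ∧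
      ∀ s ∈ Ioc 0 S, xm s < x₀ ∧ SolvesPainleveIOn (y s) (y' s) (Icc (xm s) x₀) ∧
        y s x₀ = y₀ ∧ y' s x₀ = s ∧ y' s (xm s) = 0 ∧ (x₀ - xm s) ^ 2 ≤ 2 * s := by
  -- `T² > 2S`, and the box `[-M, M]²` contains the trajectories on `[xm s, x₀]`.
  set T := S + 1
  set M := |y₀| + S * T + S
  have hM : 0 ≤ M := by positivity
  obtain ⟨Y, hY, K, hK⟩ := exists_truncatedPainleveField_flow x₀ y₀ (S := S) (T := T)
    (by positivity) hM
  have htrunc : ∀ s ∈ Ioc 0 S, SolvesTruncatedPainleveIOn M (fun t => (Y s t).1)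
      (fun t => (Y s t).2) (Icc (x₀ - T) x₀) := fun s hs =>
    solvesTruncatedPainleveIOn_of_hasDerivAt (hY s ⟨hs.1.le, hs.2⟩).2
  have hinit : ∀ s ∈ Ioc 0 S, (Y s x₀).1 = y₀ ∧ (Y s x₀).2 = s := fun s hs => by
    simp [(hY s ⟨hs.1.le, hs.2⟩).1]
  have hzero : ∀ s, ∃ xm, s ∈ Ioc 0 S → xm ∈ Ioo (x₀ - T) x₀ ∧ (Y s xm).2 = 0 := by
    intro s
    by_cases hs : s ∈ Ioc 0 S
    · obtain ⟨xm, hxm, h0⟩ := (htrunc s hs).exists_deriv_eq_zero hx₀ (by linarith)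
        (by rw [(hinit s hs).2]; exact hs.1) (by rw [(hinit s hs).2]; nlinarith [hs.2])
      exact ⟨xm, fun _ => ⟨hxm, h0⟩⟩
    · exact ⟨0, fun h => absurd h hs⟩
  choose xm hxm using hzero
  have hmin : ∀ s ∈ Ioc 0 S, IsMinOn (fun t => (Y s t).1) (Icc (x₀ - T) x₀) (xm s) := fun s hs =>
    (htrunc s hs).isMinOn hM hx₀ (Ioo_subset_Icc_self (hxm s hs).1) (hxm s hs).2
  refine ⟨xm, fun s t => (Y s t).1, fun s t => (Y s t).2, ?_, fun s hs => ?_⟩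
  · -- `xm s` minimises the whole trajectory on the fixed interval `[x₀ - T, x₀]`, so the minimum
    -- value inherits the Lipschitz dependence of the flow on `s`.
    refine (LipschitzOnWith.of_dist_le_mul (K := K) fun s hs s' hs' => ?_).continuousOn
    refine (hmin s hs).dist_le (hmin s' hs') (Ioo_subset_Icc_self (hxm s hs).1)
      (Ioo_subset_Icc_self (hxm s' hs').1) fun t ht => ?_
    refine le_trans ?_ ((hK t ht).dist_le_mul s ⟨hs.1.le, hs.2⟩ s' ⟨hs'.1.le, hs'.2⟩)
    rw [Prod.dist_eq]
    exact le_max_left _ _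
  obtain ⟨hxmI, h0⟩ := hxm s hs
  obtain ⟨hy₀, hs₀⟩ := hinit s hs
  refine ⟨hxmI.2, (htrunc s hs).solvesPainleveIOn hx₀ (Ioo_subset_Icc_self hxmI) h0
    (by simp only [hs₀]; nlinarith [hs.2, abs_nonneg y₀]) ?_, hy₀, hs₀, h0, ?_⟩
  · simp only [hy₀, hs₀, sub_sub_cancel]
    nlinarith [hs.2, hs.1, abs_nonneg y₀]
  · have := (htrunc s hs).deriv_add_sq_div_two_le hx₀ (Ioo_subset_Icc_self hxmI)
    simp only [h0, hs₀] at this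
    linarith

theorem exists_solvesPainleveIOn_minimum (x₀ y₀ y_l : ℝ) (hx₀ : x₀ ≤ 0) (hlt : y_l < y₀) :
    ∃ (x_min : ℝ) (y y' : ℝ → ℝ), x_min < x₀ ∧ SolvesPainleveIOn y y' (Icc x_min x₀) ∧
      y x₀ = y₀ ∧ y x_min = y_l ∧ y' x_min = 0 ∧ ∀ x ∈ Icc x_min x₀, y_l ≤ y x := by
  -- If the minimum for the slope `S` were `≥ y_l`, the energy inequality would give
  -- `S²/2 ≤ 2 (y₀³ - y_l³) + (|x₀| + S + 1) (y₀ - y_l)`, which fails for this `S`.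
  set S := 2 * (2 * (y₀ ^ 3 - y_l ^ 3) + |x₀| + 1 + (y₀ - y_l)) + 1
  set s₁ := min (1 / 2) ((y₀ - y_l) / 2)
  have hcube : y_l ^ 3 < y₀ ^ 3 := Odd.strictMono_pow (by decide) hlt
  have hs₁pos : 0 < s₁ := lt_min (by norm_num) (by linarith)
  have hs₁S : s₁ ≤ S := (min_le_left _ _).trans (by linarith [abs_nonneg x₀])
  obtain ⟨xm, y, y', hcont, hfam⟩ := exists_shooting_family x₀ y₀ hx₀ (hs₁pos.le.trans hs₁S)
  have hsmall : y_l < y s₁ (xm s₁) := by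
    obtain ⟨hlt₁, hsol, hy₀, hs, -, hsq⟩ := hfam s₁ ⟨hs₁pos, hs₁S⟩
    have := hsol.sub_deriv_mul_le hx₀ hlt₁.le
    rw [hy₀, hs] at this
    have : x₀ - xm s₁ ≤ 1 := by nlinarith [min_le_left (1 / 2 : ℝ) ((y₀ - y_l) / 2)]
    nlinarith [min_le_right (1 / 2 : ℝ) ((y₀ - y_l) / 2)]
  have hlarge : y S (xm S) < y_l := by
    by_contra! hge
    obtain ⟨hltS, hsol, hy₀, hs, h0, hsq⟩ := hfam S ⟨hs₁pos.trans_le hs₁S, le_rfl⟩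
    have henergy := hsol.deriv_sq_div_two_le hx₀ hltS.le h0
    rw [hy₀, hs] at henergy
    have hup : y S (xm S) < y₀ := hy₀ ▸
      hsol.strictMonoOn hx₀ h0 (left_mem_Icc.2 hltS.le) (right_mem_Icc.2 hltS.le) hltS
    have hcube' : y_l ^ 3 ≤ y S (xm S) ^ 3 := (Odd.strictMono_pow (by decide)).monotone hge
    have hdist : x₀ - xm S ≤ S + 1 := by nlinarith
    have : -xm S * (y₀ - y S (xm S)) ≤ (|x₀| + S + 1) * (y₀ - y_l) :=
      mul_le_mul (by linarith [neg_abs_le x₀]) (by linarith) (by linarith) (by positivity)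
    nlinarith [abs_nonneg x₀]
  obtain ⟨s, hs, hys⟩ := intermediate_value_Icc' hs₁S
    (hcont.mono fun s hs => ⟨hs₁pos.trans_le hs.1, hs.2⟩) ⟨hlarge.le, hsmall.le⟩
  obtain ⟨hlt', hsol, hy₀, -, h0, -⟩ := hfam s ⟨hs₁pos.trans_le hs.1, hs.2⟩
  exact ⟨xm s, y s, y' s, hlt', hsol, hy₀, hys, h0, fun x hx =>
    hys ▸ (hsol.strictMonoOn hx₀ h0).monotoneOn (left_mem_Icc.2 hlt'.le) hx hx.1⟩

/-- Given `x₀ ≤ 0` and `y₀ > y_l`, there is exactly one solution of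
`y'' = 6y² - x` with `y(x₀) = y₀` whose minimum value, attained at some
`x_min < x₀`, equals `y_l`.  Uniqueness is expressed via the initial slope
at `x₀`: any two such solutions have the same slope at `x₀`. -/
theorem painleveI_level_parametrization_exists_unique
    (x₀ y₀ y_l : ℝ) (hx₀ : x₀ ≤ 0) (hlt : y_l < y₀) :
    (∃ (x_min : ℝ) (y y' : ℝ → ℝ), x_min < x₀ ∧
      (∀ x ∈ Set.Icc x_min x₀,
        HasDerivAt y (y' x) x ∧ HasDerivAt y' (6 * (y x) ^ 2 - x) x) ∧
      y x₀ = y₀ ∧ y x_min = y_l ∧ y' x_min = 0 ∧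
      (∀ x ∈ Set.Icc x_min x₀, y_l ≤ y x)) ∧
    (∀ (xm₁ xm₂ : ℝ) (y₁ y₁' y₂ y₂' : ℝ → ℝ),
      (xm₁ < x₀ ∧
        (∀ x ∈ Set.Icc xm₁ x₀,
          HasDerivAt y₁ (y₁' x) x ∧ HasDerivAt y₁' (6 * (y₁ x) ^ 2 - x) x) ∧
        y₁ x₀ = y₀ ∧ y₁ xm₁ = y_l ∧ y₁' xm₁ = 0 ∧
        (∀ x ∈ Set.Icc xm₁ x₀, y_l ≤ y₁ x)) →
      (xm₂ < x₀ ∧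
        (∀ x ∈ Set.Icc xm₂ x₀,
          HasDerivAt y₂ (y₂' x) x ∧ HasDerivAt y₂' (6 * (y₂ x) ^ 2 - x) x) ∧
        y₂ x₀ = y₀ ∧ y₂ xm₂ = y_l ∧ y₂' xm₂ = 0 ∧
        (∀ x ∈ Set.Icc xm₂ x₀, y_l ≤ y₂ x)) →
      y₁' x₀ = y₂' x₀) := by
  refine ⟨exists_solvesPainleveIOn_minimum x₀ y₀ y_l hx₀ hlt, ?_⟩
  rintro xm₁ xm₂ y₁ y₁' y₂ y₂' ⟨h₁, hsol₁, hy₁, hyl₁, h₁0, -⟩ ⟨h₂, hsol₂, hy₂, hyl₂, h₂0, -⟩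
  exact SolvesPainleveIOn.deriv_right_eq hsol₁ hsol₂ hx₀ h₁ h₂ h₁0 h₂0 (hyl₁.trans hyl₂.symm)
    (hy₁.trans hy₂.symm)
end

section
/- Let y₁, y₂ be real solutions of y'' = 6y² − x both having a pole at x₀ with intervals of existence to the left of x₀, with Laurent parameters c₁ > c₂ (the coefficients of (x − x₀)⁴). Then in some left neighbourhood of x₀: y₁(x) > y₂(x) and 0 < y'₁(x) < y'₂(x); moreover the minimum values satisfy y₁,min > y₂,min. -/
open Filter Set Topology Function

/-!
Near the pole, `y₁ - y₂ ~ (c₁ - c₂)(x - x₀)⁴` is positive and tends to `0`, while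
`(y₁ - y₂)'' = 6 (y₁ - y₂)(y₁ + y₂) > 0`; a positive function with increasing derivative that
tends to `0` must be decreasing, so `y₁' < y₂'`.

For the minima, assume `y₁,min ≤ y₂,min` and describe the rising branches by their inverse
functions `x = gᵢ(v)`. The energies `pᵢ(v) = yᵢ'(gᵢ v)²` satisfy `pᵢ' = 2 (6 v² - gᵢ)`, so
`q = p₁ - p₂` has `q' = 2 (g₂ - g₁)`, while `(g₂ - g₁)' = 1 / y₂' - 1 / y₁'`. Near the pole
`q < 0 < g₂ - g₁`, and descending in `v` each of these signs preserves the other. Hence `q` stays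
below a negative constant down to `v = y₂,min`, where `p₂ → 0` although `p₁ ≥ 0`.
-/

section Monotonicity

variable {D : Set ℝ} {f f' : ℝ → ℝ}

lemma strictMonoOn_of_hasDerivAt_pos (hD : Convex ℝ D) (hf : ∀ x ∈ D, HasDerivAt f (f' x) x)
    (hf' : ∀ x ∈ interior D, 0 < f' x) : StrictMonoOn f D :=
  strictMonoOn_of_hasDerivWithinAt_pos hD (fun x hx => (hf x hx).continuousAt.continuousWithinAt)
    (fun x hx => (hf x (interior_subset hx)).hasDerivWithinAt) hf'

lemma strictAntiOn_of_hasDerivAt_neg (hD : Convex ℝ D) (hf : ∀ x ∈ D, HasDerivAt f (f' x) x)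
    (hf' : ∀ x ∈ interior D, f' x < 0) : StrictAntiOn f D :=
  strictAntiOn_of_hasDerivWithinAt_neg hD (fun x hx => (hf x hx).continuousAt.continuousWithinAt)
    (fun x hx => (hf x (interior_subset hx)).hasDerivWithinAt) hf'

lemma monotoneOn_of_hasDerivAt_nonneg (hD : Convex ℝ D) (hf : ∀ x ∈ D, HasDerivAt f (f' x) x)
    (hf' : ∀ x ∈ interior D, 0 ≤ f' x) : MonotoneOn f D :=
  monotoneOn_of_hasDerivWithinAt_nonneg hD (fun x hx => (hf x hx).continuousAt.continuousWithinAt)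
    (fun x hx => (hf x (interior_subset hx)).hasDerivWithinAt) hf'

lemma antitoneOn_of_hasDerivAt_nonpos (hD : Convex ℝ D) (hf : ∀ x ∈ D, HasDerivAt f (f' x) x)
    (hf' : ∀ x ∈ interior D, f' x ≤ 0) : AntitoneOn f D :=
  antitoneOn_of_hasDerivWithinAt_nonpos hD (fun x hx => (hf x hx).continuousAt.continuousWithinAt)
    (fun x hx => (hf x (interior_subset hx)).hasDerivWithinAt) hf'

end Monotonicity

section LeftOfPole

variable {b c : ℝ} {f f' : ℝ → ℝ}

lemma eventually_deriv_pos_of_tendsto_atTop (hbc : b < c)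
    (hf : ∀ x ∈ Ioo b c, HasDerivAt f (f' x) x) (hf' : MonotoneOn f' (Ioo b c))
    (hlim : Tendsto f (𝓝[<] c) atTop) : ∀ᶠ x in 𝓝[<] c, 0 < f' x := by
  by_contra hneg
  rw [not_eventually] at hneg
  have hnonpos : ∀ x ∈ Ioo b c, f' x ≤ 0 := by
    intro x hx
    obtain ⟨z, hz, hxz⟩ := (hneg.and_eventually (Ioo_mem_nhdsLT hx.2)).exists
    exact (hf' hx ⟨hx.1.trans hxz.1, hxz.2⟩ hxz.1.le).trans (not_lt.1 hz)
  have hanti : AntitoneOn f (Ioo b c) := antitoneOn_of_hasDerivAt_nonpos (convex_Ioo b c) hf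
    fun x hx => hnonpos x (interior_subset hx)
  obtain ⟨m, hm⟩ := exists_between hbc
  obtain ⟨x, hx, hmx⟩ := ((hlim.eventually_gt_atTop (f m)).and (Ioo_mem_nhdsLT hm.2)).exists
  exact (hanti hm ⟨hm.1.trans hmx.1, hmx.2⟩ hmx.1.le).not_gt hx

lemma deriv_neg_of_pos_of_tendsto_zero (hf : ∀ x ∈ Ioo b c, HasDerivAt f (f' x) x)
    (hf' : MonotoneOn f' (Ioo b c)) (hpos : ∀ x ∈ Ioo b c, 0 < f x)
    (hlim : Tendsto f (𝓝[<] c) (𝓝 0)) : ∀ x ∈ Ioo b c, f' x < 0 := by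
  intro ξ hξ
  by_contra! hξ'
  have hsub : Ioo ξ c ⊆ Ioo b c := Ioo_subset_Ioo_left hξ.1.le
  have hmono : MonotoneOn f (Ioo ξ c) :=
    monotoneOn_of_hasDerivAt_nonneg (convex_Ioo ξ c) (fun x hx => hf x (hsub hx)) fun x hx => by
      rw [interior_Ioo] at hx
      exact hξ'.trans (hf' hξ (hsub hx) hx.1.le)
  obtain ⟨x, hx⟩ := exists_between hξ.2
  have hle : f x ≤ 0 := ge_of_tendsto hlim <| mem_of_superset (Ioo_mem_nhdsLT hx.2)
    fun z hz => hmono hx ⟨hx.1.trans hz.1, hz.2⟩ hz.1.le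
  exact (hpos x (hsub hx)).not_ge hle

variable {x₀ L : ℝ} {n : ℕ}

lemma eventually_pos_of_tendsto_div_pow (hn : Even n) (hL : 0 < L)
    (hf : Tendsto (fun x => f x / (x - x₀) ^ n) (𝓝[<] x₀) (𝓝 L)) : ∀ᶠ x in 𝓝[<] x₀, 0 < f x := by
  filter_upwards [hf.eventually (eventually_gt_nhds hL), self_mem_nhdsWithin] with x hx hlt
  exact (div_pos_iff_of_pos_right (hn.pow_pos (sub_ne_zero.2 (ne_of_lt hlt)))).1 hx

lemma tendsto_zero_of_tendsto_div_pow (hn : n ≠ 0)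
    (hf : Tendsto (fun x => f x / (x - x₀) ^ n) (𝓝[<] x₀) (𝓝 L)) : Tendsto f (𝓝[<] x₀) (𝓝 0) := by
  have hpow : Tendsto (fun x => (x - x₀) ^ n) (𝓝[<] x₀) (𝓝 0) := by
    have : Tendsto (fun x : ℝ => (x - x₀) ^ n) (𝓝 x₀) (𝓝 ((x₀ - x₀) ^ n)) :=
      ((continuous_id.sub continuous_const).pow n).tendsto x₀
    rw [sub_self, zero_pow hn] at this
    exact this.mono_left nhdsWithin_le_nhds
  simpa using (hf.mul hpow).congr' <| by
    filter_upwards [self_mem_nhdsWithin] with x hlt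
    exact div_mul_cancel₀ _ (pow_ne_zero n (sub_ne_zero.2 (ne_of_lt hlt)))

end LeftOfPole

section RisingBranch

variable {m b v : ℝ} {y y' : ℝ → ℝ}

lemma surjOn_Ioi_of_tendsto_atTop (hmb : m < b) (hy : ContinuousOn y (Ico m b))
    (hlim : Tendsto y (𝓝[<] b) atTop) : SurjOn y (Ioo m b) (Ioi (y m)) := by
  intro v hv
  obtain ⟨x, hvx, hx⟩ := ((hlim.eventually_gt_atTop v).and (Ioo_mem_nhdsLT hmb)).exists
  obtain ⟨z, hz, rfl⟩ := intermediate_value_Ioo hx.1.le (hy.mono (Icc_subset_Ico_right hx.2))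
    ⟨hv, hvx⟩
  exact ⟨z, ⟨hz.1, hz.2.trans hx.2⟩, rfl⟩

lemma invFunOn_apply_Ioo (hmono : StrictMonoOn y (Ico m b)) {x : ℝ} (hx : x ∈ Ioo m b) :
    invFunOn y (Ioo m b) (y x) = x :=
  (hmono.mono Ioo_subset_Ico_self).injOn.leftInvOn_invFunOn hx

lemma strictMonoOn_invFunOn_Ioo (hmono : StrictMonoOn y (Ico m b))
    (hsurj : SurjOn y (Ioo m b) (Ioi (y m))) :
    StrictMonoOn (invFunOn y (Ioo m b)) (Ioi (y m)) := by
  intro v hv w hw hvw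
  have hv' := invFunOn_mem (hsurj hv)
  have hw' := invFunOn_mem (hsurj hw)
  rwa [← hmono.lt_iff_lt (Ioo_subset_Ico_self hv') (Ioo_subset_Ico_self hw'),
    invFunOn_eq (hsurj hv), invFunOn_eq (hsurj hw)]

lemma continuousAt_invFunOn_Ioo (hmono : StrictMonoOn y (Ico m b))
    (hsurj : SurjOn y (Ioo m b) (Ioi (y m))) (hv : y m < v) :
    ContinuousAt (invFunOn y (Ioo m b)) v := by
  refine (strictMonoOn_invFunOn_Ioo hmono hsurj).continuousAt_of_image_mem_nhds
    (Ioi_mem_nhds hv) ?_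
  refine mem_of_superset (isOpen_Ioo.mem_nhds (invFunOn_mem (hsurj hv))) fun x hx => ?_
  exact ⟨y x, hmono (left_mem_Ico.2 (hx.1.trans hx.2)) (Ioo_subset_Ico_self hx) hx.1,
    invFunOn_apply_Ioo hmono hx⟩

lemma hasDerivAt_invFunOn_Ioo (hmono : StrictMonoOn y (Ico m b))
    (hsurj : SurjOn y (Ioo m b) (Ioi (y m))) (hy : ∀ x ∈ Ioo m b, HasDerivAt y (y' x) x)
    (hy' : ∀ x ∈ Ioo m b, y' x ≠ 0) (hv : y m < v) :
    HasDerivAt (invFunOn y (Ioo m b)) (y' (invFunOn y (Ioo m b) v))⁻¹ v :=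
  have hmem := invFunOn_mem (hsurj hv)
  (hy _ hmem).of_local_left_inverse (continuousAt_invFunOn_Ioo hmono hsurj hv) (hy' _ hmem) <|
    mem_of_superset (Ioi_mem_nhds hv) fun _ hw => invFunOn_eq (hsurj hw)

lemma tendsto_invFunOn_Ioo_atTop (hmono : StrictMonoOn y (Ico m b))
    (hsurj : SurjOn y (Ioo m b) (Ioi (y m))) :
    Tendsto (invFunOn y (Ioo m b)) atTop (𝓝[<] b) := by
  have hmem : ∀ᶠ v in atTop, invFunOn y (Ioo m b) v ∈ Ioo m b :=
    (eventually_gt_atTop (y m)).mono fun v hv => invFunOn_mem (hsurj hv)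
  refine tendsto_nhdsWithin_iff.2 ⟨tendsto_order.2 ⟨fun l hl => ?_, fun u hu => ?_⟩,
    hmem.mono fun v hv => hv.2⟩
  · obtain ⟨x₁, hx₁, -⟩ := hsurj (lt_add_one (y m))
    obtain ⟨x, hlx, hxb⟩ := exists_between (max_lt hl hx₁.2)
    have hx : x ∈ Ioo m b := ⟨hx₁.1.trans ((le_max_right l x₁).trans_lt hlx), hxb⟩
    have hyx : y m < y x := hmono (left_mem_Ico.2 (hx.1.trans hx.2)) (Ioo_subset_Ico_self hx) hx.1
    filter_upwards [eventually_gt_atTop (y x)] with v hv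
    calc l < x := (le_max_left l x₁).trans_lt hlx
      _ = invFunOn y (Ioo m b) (y x) := (invFunOn_apply_Ioo hmono hx).symm
      _ < invFunOn y (Ioo m b) v := strictMonoOn_invFunOn_Ioo hmono hsurj hyx (hyx.trans hv) hv
  · exact hmem.mono fun v hv => hv.2.trans hu

lemma exists_sq_deriv_comp_invFunOn_lt (hmono : StrictMonoOn y (Ico m b)) (hmb : m < b)
    (hy : ContinuousAt y m) (hy' : ContinuousAt y' m) (hcrit : y' m = 0) {ε V : ℝ} (hε : 0 < ε)
    (hV : y m < V) : ∃ v ∈ Ioo (y m) V, y' (invFunOn y (Ioo m b) v) ^ 2 < ε := by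
  have hsmall : ∀ᶠ x in 𝓝 m, y' x ^ 2 < ε ∧ y x < V :=
    ((hy'.pow 2).eventually (eventually_lt_nhds (by simpa [hcrit] using hε))).and
      (hy.eventually (eventually_lt_nhds hV))
  obtain ⟨x, ⟨hx', hxV⟩, hx⟩ :=
    ((hsmall.filter_mono nhdsWithin_le_nhds).and (Ioo_mem_nhdsGT hmb)).exists
  refine ⟨y x, ⟨hmono (left_mem_Ico.2 hmb) (Ioo_subset_Ico_self hx) hx.1, hxV⟩, ?_⟩
  rwa [invFunOn_apply_Ioo hmono hx]

end RisingBranch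

section CoupledSigns

variable {q q' h h' : ℝ → ℝ}

lemma neg_and_pos_of_forall_Ioc {s V : ℝ} (hq : ∀ v ∈ Icc s V, HasDerivAt q (q' v) v)
    (hh : ∀ v ∈ Icc s V, HasDerivAt h (h' v) v) (hq' : ∀ v ∈ Ioo s V, 0 < h v → 0 < q' v)
    (hh' : ∀ v ∈ Ioo s V, q v < 0 → h' v < 0) (hsV : s < V)
    (hgood : ∀ v ∈ Ioc s V, q v < 0 ∧ 0 < h v) : q s < 0 ∧ 0 < h s := by
  have hqs : q s < q V :=
    strictMonoOn_of_hasDerivAt_pos (convex_Icc s V) hq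
      (fun w hw => by
        rw [interior_Icc] at hw
        exact hq' w hw (hgood w (Ioo_subset_Ioc_self hw)).2)
      (left_mem_Icc.2 hsV.le) (right_mem_Icc.2 hsV.le) hsV
  have hhs : h V < h s :=
    strictAntiOn_of_hasDerivAt_neg (convex_Icc s V) hh
      (fun w hw => by
        rw [interior_Icc] at hw
        exact hh' w hw (hgood w (Ioo_subset_Ioc_self hw)).1)
      (left_mem_Icc.2 hsV.le) (right_mem_Icc.2 hsV.le) hsV
  have hV := hgood V (right_mem_Ioc.2 hsV)
  exact ⟨by linarith, by linarith⟩

/-- Descending from `V`: while `h > 0` the function `q` increases, so it stays below `q V < 0`;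
while `q < 0` the function `h` decreases, so it stays above `h V > 0`. -/
lemma neg_and_pos_of_hasDerivAt_of_coupled {m V : ℝ}
    (hq : ∀ v ∈ Ioc m V, HasDerivAt q (q' v) v) (hh : ∀ v ∈ Ioc m V, HasDerivAt h (h' v) v)
    (hq' : ∀ v ∈ Ioc m V, 0 < h v → 0 < q' v) (hh' : ∀ v ∈ Ioc m V, q v < 0 → h' v < 0)
    (hqV : q V < 0) (hhV : 0 < h V) : ∀ v ∈ Ioc m V, q v < 0 ∧ 0 < h v := by
  intro v hv
  by_contra hbad
  have hsub : ∀ {s}, v ≤ s → Icc s V ⊆ Ioc m V := fun hs w hw =>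
    ⟨hv.1.trans_le (hs.trans hw.1), hw.2⟩
  have hqc : ContinuousOn q (Icc v V) := fun w hw =>
    (hq w (hsub le_rfl hw)).continuousAt.continuousWithinAt
  have hhc : ContinuousOn h (Icc v V) := fun w hw =>
    (hh w (hsub le_rfl hw)).continuousAt.continuousWithinAt
  set B := Icc v V ∩ q ⁻¹' Ici 0 ∪ Icc v V ∩ h ⁻¹' Iic 0 with hB
  have hBclosed : IsClosed B := (hqc.preimage_isClosed_of_isClosed isClosed_Icc isClosed_Ici).union
    (hhc.preimage_isClosed_of_isClosed isClosed_Icc isClosed_Iic)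
  have hmemB : ∀ w ∈ Icc v V, w ∈ B ↔ ¬(q w < 0 ∧ 0 < h w) := fun w hw => by
    simp only [hB, mem_union, mem_inter_iff, mem_preimage, mem_Ici, mem_Iic, hw, true_and,
      not_and_or, not_lt]
  have hBbdd : BddAbove B := ⟨V, by rintro w (hw | hw) <;> exact hw.1.2⟩
  have hsB : sSup B ∈ B := hBclosed.csSup_mem ⟨v, (hmemB v (left_mem_Icc.2 hv.2)).2 hbad⟩ hBbdd
  have hsI : sSup B ∈ Icc v V := by rcases hsB with hs | hs <;> exact hs.1
  have hsV : sSup B < V := hsI.2.lt_of_ne fun hsV => (hmemB _ hsI).1 hsB (hsV ▸ ⟨hqV, hhV⟩)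
  refine (hmemB _ hsI).1 hsB (neg_and_pos_of_forall_Ioc (fun w hw => hq w (hsub hsI.1 hw))
    (fun w hw => hh w (hsub hsI.1 hw)) (fun w hw => hq' w (hsub hsI.1 (Ioo_subset_Icc_self hw)))
    (fun w hw => hh' w (hsub hsI.1 (Ioo_subset_Icc_self hw))) hsV fun w hw => ?_)
  by_contra hw'
  exact (le_csSup hBbdd ((hmemB w ⟨hsI.1.trans hw.1.le, hw.2⟩).2 hw')).not_gt hw.1

end CoupledSigns

def IsPainleveISolutionOn (y y' : ℝ → ℝ) (s : Set ℝ) : Prop :=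
  ∀ x ∈ s, HasDerivAt y (y' x) x ∧ HasDerivAt y' (6 * y x ^ 2 - x) x

namespace IsPainleveISolutionOn

variable {a x₀ xm v : ℝ} {y y' : ℝ → ℝ}

theorem strictMonoOn_deriv (h : IsPainleveISolutionOn y y' (Ioo a x₀)) (hx₀ : x₀ ≤ 0) :
    StrictMonoOn y' (Ioo a x₀) :=
  strictMonoOn_of_hasDerivAt_pos (convex_Ioo a x₀) (fun x hx => (h x hx).2) fun x hx => by
    rw [interior_Ioo] at hx
    nlinarith [sq_nonneg (y x), hx.2]

theorem deriv_pos_of_deriv_eq_zero (h : IsPainleveISolutionOn y y' (Ioo a x₀)) (hx₀ : x₀ ≤ 0)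
    (hxm : xm ∈ Ioo a x₀) (hcrit : y' xm = 0) : ∀ x ∈ Ioo xm x₀, 0 < y' x := fun _ hx =>
  hcrit ▸ h.strictMonoOn_deriv hx₀ hxm ⟨hxm.1.trans hx.1, hx.2⟩ hx.1

theorem strictMonoOn_Ico_of_deriv_eq_zero (h : IsPainleveISolutionOn y y' (Ioo a x₀))
    (hx₀ : x₀ ≤ 0) (hxm : xm ∈ Ioo a x₀) (hcrit : y' xm = 0) : StrictMonoOn y (Ico xm x₀) :=
  strictMonoOn_of_hasDerivAt_pos (convex_Ico xm x₀)
    (fun x hx => (h x ⟨hxm.1.trans_le hx.1, hx.2⟩).1) fun x hx => by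
      rw [interior_Ico] at hx
      exact h.deriv_pos_of_deriv_eq_zero hx₀ hxm hcrit x hx

theorem surjOn_Ioi (h : IsPainleveISolutionOn y y' (Ioo a x₀)) (hxm : xm ∈ Ioo a x₀)
    (hpole : Tendsto y (𝓝[<] x₀) atTop) : SurjOn y (Ioo xm x₀) (Ioi (y xm)) :=
  surjOn_Ioi_of_tendsto_atTop hxm.2
    (fun x hx => (h x ⟨hxm.1.trans_le hx.1, hx.2⟩).1.continuousAt.continuousWithinAt) hpole

theorem hasDerivAt_invFunOn (h : IsPainleveISolutionOn y y' (Ioo a x₀)) (hx₀ : x₀ ≤ 0)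
    (hxm : xm ∈ Ioo a x₀) (hcrit : y' xm = 0) (hpole : Tendsto y (𝓝[<] x₀) atTop)
    (hv : y xm < v) :
    HasDerivAt (invFunOn y (Ioo xm x₀)) (y' (invFunOn y (Ioo xm x₀) v))⁻¹ v :=
  hasDerivAt_invFunOn_Ioo (h.strictMonoOn_Ico_of_deriv_eq_zero hx₀ hxm hcrit)
    (h.surjOn_Ioi hxm hpole) (fun x hx => (h x ⟨hxm.1.trans hx.1, hx.2⟩).1)
    (fun x hx => (h.deriv_pos_of_deriv_eq_zero hx₀ hxm hcrit x hx).ne') hv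

/-- In the height variable `v = y(x)` the energy identity reads `d(y'²)/dv = 2 y''`. -/
theorem hasDerivAt_sq_deriv_comp_invFunOn (h : IsPainleveISolutionOn y y' (Ioo a x₀))
    (hx₀ : x₀ ≤ 0) (hxm : xm ∈ Ioo a x₀) (hcrit : y' xm = 0) (hpole : Tendsto y (𝓝[<] x₀) atTop)
    (hv : y xm < v) :
    HasDerivAt (fun w => y' (invFunOn y (Ioo xm x₀) w) ^ 2)
      (2 * (6 * v ^ 2 - invFunOn y (Ioo xm x₀) v)) v := by
  have hsurj := h.surjOn_Ioi hxm hpole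
  have hmem := invFunOn_mem (hsurj hv)
  have hne := (h.deriv_pos_of_deriv_eq_zero hx₀ hxm hcrit _ hmem).ne'
  refine (((h _ ⟨hxm.1.trans hmem.1, hmem.2⟩).2.comp v
    (h.hasDerivAt_invFunOn hx₀ hxm hcrit hpole hv)).pow 2).congr_deriv ?_
  rw [comp_apply, invFunOn_eq (hsurj hv)]
  field_simp
  ring

end IsPainleveISolutionOn

section TwoSolutions

variable {x₀ a₁ a₂ xm₁ xm₂ : ℝ} {y₁ y₁' y₂ y₂' : ℝ → ℝ}

theorem painleveI_eventually_deriv_lt (ha₁ : a₁ < x₀) (ha₂ : a₂ < x₀)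
    (h₁ : IsPainleveISolutionOn y₁ y₁' (Ioo a₁ x₀)) (h₂ : IsPainleveISolutionOn y₂ y₂' (Ioo a₂ x₀))
    (hpole₁ : Tendsto y₁ (𝓝[<] x₀) atTop) (hpole₂ : Tendsto y₂ (𝓝[<] x₀) atTop)
    (hd : ∀ᶠ x in 𝓝[<] x₀, y₂ x < y₁ x) (hd₀ : Tendsto (fun x => y₁ x - y₂ x) (𝓝[<] x₀) (𝓝 0)) :
    ∀ᶠ x in 𝓝[<] x₀, y₁' x < y₂' x := by
  have hnear : ∀ᶠ x in 𝓝[<] x₀,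
      y₂ x < y₁ x ∧ 0 < y₁ x + y₂ x ∧ x ∈ Ioo a₁ x₀ ∧ x ∈ Ioo a₂ x₀ := by
    filter_upwards [hd, hpole₁.eventually_gt_atTop 0, hpole₂.eventually_gt_atTop 0,
      Ioo_mem_nhdsLT ha₁, Ioo_mem_nhdsLT ha₂] with x hx hx₁ hx₂ hxa₁ hxa₂
    exact ⟨hx, by linarith, hxa₁, hxa₂⟩
  obtain ⟨b, hb, hsub⟩ := mem_nhdsLT_iff_exists_Ioo_subset.1 hnear
  have hderiv : ∀ x ∈ Ioo b x₀, HasDerivAt (fun x => y₁ x - y₂ x) (y₁' x - y₂' x) x ∧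
      HasDerivAt (fun x => y₁' x - y₂' x) ((6 * y₁ x ^ 2 - x) - (6 * y₂ x ^ 2 - x)) x :=
    fun x hx => ⟨((h₁ x (hsub hx).2.2.1).1.sub (h₂ x (hsub hx).2.2.2).1),
      ((h₁ x (hsub hx).2.2.1).2.sub (h₂ x (hsub hx).2.2.2).2)⟩
  -- `(y₁ - y₂)'' = 6 (y₁ - y₂)(y₁ + y₂) > 0`
  have hconvex : MonotoneOn (fun x => y₁' x - y₂' x) (Ioo b x₀) :=
    monotoneOn_of_hasDerivAt_nonneg (convex_Ioo b x₀) (fun x hx => (hderiv x hx).2)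
      fun x hx => by
        rw [interior_Ioo] at hx
        obtain ⟨hlt, hsum, -⟩ := hsub hx
        nlinarith [mul_pos (sub_pos.2 hlt) hsum]
  have hneg := deriv_neg_of_pos_of_tendsto_zero (fun x hx => (hderiv x hx).1) hconvex
    (fun x hx => sub_pos.2 (hsub hx).1) hd₀
  filter_upwards [Ioo_mem_nhdsLT hb] with x hx
  exact sub_neg.1 (hneg x hx)

theorem painleveI_eventually_invFunOn_lt (hx₀ : x₀ ≤ 0)
    (h₂ : IsPainleveISolutionOn y₂ y₂' (Ioo a₂ x₀)) (hxm₂ : xm₂ ∈ Ioo a₂ x₀)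
    (hmono₁ : StrictMonoOn y₁ (Ico xm₁ x₀)) (hsurj₁ : SurjOn y₁ (Ioo xm₁ x₀) (Ioi (y₁ xm₁)))
    (hmono₂ : StrictMonoOn y₂ (Ico xm₂ x₀)) (hsurj₂ : SurjOn y₂ (Ioo xm₂ x₀) (Ioi (y₂ xm₂)))
    (hA : ∀ᶠ x in 𝓝[<] x₀, y₂ x < y₁ x ∧ y₁' x < y₂' x) :
    ∀ᶠ v in atTop, invFunOn y₁ (Ioo xm₁ x₀) v < invFunOn y₂ (Ioo xm₂ x₀) v ∧
      y₁' (invFunOn y₁ (Ioo xm₁ x₀) v) < y₂' (invFunOn y₂ (Ioo xm₂ x₀) v) := by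
  filter_upwards [(tendsto_invFunOn_Ioo_atTop hmono₁ hsurj₁).eventually
      (hA.and (Ioo_mem_nhdsLT hxm₂.2)), eventually_gt_atTop (y₁ xm₁),
    eventually_gt_atTop (y₂ xm₂)] with v ⟨⟨hlt, hderiv⟩, hx⟩ hv₁ hv₂
  have hg₂ := invFunOn_mem (hsurj₂ hv₂)
  have hlt₂ : invFunOn y₁ (Ioo xm₁ x₀) v < invFunOn y₂ (Ioo xm₂ x₀) v := by
    rw [← hmono₂.lt_iff_lt (Ioo_subset_Ico_self hx) (Ioo_subset_Ico_self hg₂),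
      invFunOn_eq (hsurj₂ hv₂)]
    exact hlt.trans_eq (invFunOn_eq (hsurj₁ hv₁))
  exact ⟨hlt₂, hderiv.trans (h₂.strictMonoOn_deriv hx₀ ⟨hxm₂.1.trans hx.1, hx.2⟩
    ⟨hxm₂.1.trans hg₂.1, hg₂.2⟩ hlt₂)⟩

theorem painleveI_value_lt_of_deriv_eq_zero (hx₀ : x₀ ≤ 0)
    (h₁ : IsPainleveISolutionOn y₁ y₁' (Ioo a₁ x₀)) (h₂ : IsPainleveISolutionOn y₂ y₂' (Ioo a₂ x₀))
    (hpole₁ : Tendsto y₁ (𝓝[<] x₀) atTop) (hpole₂ : Tendsto y₂ (𝓝[<] x₀) atTop)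
    (hA : ∀ᶠ x in 𝓝[<] x₀, y₂ x < y₁ x ∧ y₁' x < y₂' x)
    (hxm₁ : xm₁ ∈ Ioo a₁ x₀) (hxm₂ : xm₂ ∈ Ioo a₂ x₀) (hcrit₁ : y₁' xm₁ = 0)
    (hcrit₂ : y₂' xm₂ = 0) : y₂ xm₂ < y₁ xm₁ := by
  by_contra! hle
  have hmono₁ := h₁.strictMonoOn_Ico_of_deriv_eq_zero hx₀ hxm₁ hcrit₁
  have hmono₂ := h₂.strictMonoOn_Ico_of_deriv_eq_zero hx₀ hxm₂ hcrit₂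
  have hsurj₁ := h₁.surjOn_Ioi hxm₁ hpole₁
  have hsurj₂ := h₂.surjOn_Ioi hxm₂ hpole₂
  set g₁ := invFunOn y₁ (Ioo xm₁ x₀)
  set g₂ := invFunOn y₂ (Ioo xm₂ x₀)
  have hpos₁ : ∀ v > y₂ xm₂, 0 < y₁' (g₁ v) := fun v hv =>
    h₁.deriv_pos_of_deriv_eq_zero hx₀ hxm₁ hcrit₁ _ (invFunOn_mem (hsurj₁ (hle.trans_lt hv)))
  have hpos₂ : ∀ v > y₂ xm₂, 0 < y₂' (g₂ v) := fun v hv =>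
    h₂.deriv_pos_of_deriv_eq_zero hx₀ hxm₂ hcrit₂ _ (invFunOn_mem (hsurj₂ hv))
  obtain ⟨V, ⟨hgV, hderivV⟩, hV⟩ := ((painleveI_eventually_invFunOn_lt hx₀ h₂ hxm₂ hmono₁ hsurj₁
    hmono₂ hsurj₂ hA).and (eventually_gt_atTop (y₂ xm₂))).exists
  have hq : ∀ v ∈ Ioc (y₂ xm₂) V, HasDerivAt (fun w => y₁' (g₁ w) ^ 2 - y₂' (g₂ w) ^ 2)
      (2 * (6 * v ^ 2 - g₁ v) - 2 * (6 * v ^ 2 - g₂ v)) v := fun v hv =>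
    (h₁.hasDerivAt_sq_deriv_comp_invFunOn hx₀ hxm₁ hcrit₁ hpole₁ (hle.trans_lt hv.1)).sub
      (h₂.hasDerivAt_sq_deriv_comp_invFunOn hx₀ hxm₂ hcrit₂ hpole₂ hv.1)
  have hh : ∀ v ∈ Ioc (y₂ xm₂) V, HasDerivAt (fun w => g₂ w - g₁ w)
      ((y₂' (g₂ v))⁻¹ - (y₁' (g₁ v))⁻¹) v := fun v hv =>
    (h₂.hasDerivAt_invFunOn hx₀ hxm₂ hcrit₂ hpole₂ hv.1).sub
      (h₁.hasDerivAt_invFunOn hx₀ hxm₁ hcrit₁ hpole₁ (hle.trans_lt hv.1))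
  have hsigns := neg_and_pos_of_hasDerivAt_of_coupled hq hh
    (fun v _ hpos => by linarith)
    (fun v hv hneg => by
      have hlt : y₁' (g₁ v) < y₂' (g₂ v) :=
        (pow_lt_pow_iff_left₀ (hpos₁ v hv.1).le (hpos₂ v hv.1).le two_ne_zero).1 (sub_neg.1 hneg)
      exact sub_neg.2 ((inv_lt_inv₀ (hpos₂ v hv.1) (hpos₁ v hv.1)).2 hlt))
    (by nlinarith [hpos₁ V hV]) (sub_pos.2 hgV)
  have hqmono : MonotoneOn (fun w => y₁' (g₁ w) ^ 2 - y₂' (g₂ w) ^ 2) (Ioc (y₂ xm₂) V) :=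
    monotoneOn_of_hasDerivAt_nonneg (convex_Ioc _ _) hq fun v hv => by
      rw [interior_Ioc] at hv
      linarith [(hsigns v (Ioo_subset_Ioc_self hv)).2]
  obtain ⟨v, hv, hsmall⟩ := exists_sq_deriv_comp_invFunOn_lt hmono₂ hxm₂.2
    (h₂ xm₂ hxm₂).1.continuousAt (h₂ xm₂ hxm₂).2.continuousAt hcrit₂
    (neg_pos.2 (hsigns V (right_mem_Ioc.2 hV)).1) hV
  have := hqmono (Ioo_subset_Ioc_self hv) (right_mem_Ioc.2 hV) hv.2.le
  nlinarith [sq_nonneg (y₁' (g₁ v))]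

end TwoSolutions

theorem painleveI_laurent_parameter_monotone_general
    (x₀ a₁ a₂ c₁ c₂ : ℝ) (hx₀ : x₀ ≤ 0) (ha₁ : a₁ < x₀) (ha₂ : a₂ < x₀)
    (y₁ y₁' y₂ y₂' : ℝ → ℝ)
    (h₁ : ∀ x ∈ Set.Ioo a₁ x₀,
      HasDerivAt y₁ (y₁' x) x ∧ HasDerivAt y₁' (6 * (y₁ x) ^ 2 - x) x)
    (h₂ : ∀ x ∈ Set.Ioo a₂ x₀,
      HasDerivAt y₂ (y₂' x) x ∧ HasDerivAt y₂' (6 * (y₂ x) ^ 2 - x) x)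
    (hpole₁ : Tendsto y₁ (𝓝[<] x₀) atTop)
    (hpole₂ : Tendsto y₂ (𝓝[<] x₀) atTop)
    (hc₁ : Tendsto (fun x : ℝ =>
        (y₁ x - 1 / (x - x₀) ^ 2 - (x₀ / 10) * (x - x₀) ^ 2
          - (1 / 6) * (x - x₀) ^ 3) / (x - x₀) ^ 4) (𝓝[<] x₀) (𝓝 c₁))
    (hc₂ : Tendsto (fun x : ℝ =>
        (y₂ x - 1 / (x - x₀) ^ 2 - (x₀ / 10) * (x - x₀) ^ 2
          - (1 / 6) * (x - x₀) ^ 3) / (x - x₀) ^ 4) (𝓝[<] x₀) (𝓝 c₂))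
    (hc : c₂ < c₁) :
    (∃ δ > 0, ∀ x ∈ Set.Ioo (x₀ - δ) x₀,
      y₂ x < y₁ x ∧ 0 < y₁' x ∧ y₁' x < y₂' x) ∧
    (∀ xm₁ ∈ Set.Ioo a₁ x₀, ∀ xm₂ ∈ Set.Ioo a₂ x₀,
      IsMinOn y₁ (Set.Ioo a₁ x₀) xm₁ → IsMinOn y₂ (Set.Ioo a₂ x₀) xm₂ →
      y₂ xm₂ < y₁ xm₁) := by
  have hdiff : Tendsto (fun x => (y₁ x - y₂ x) / (x - x₀) ^ 4) (𝓝[<] x₀) (𝓝 (c₁ - c₂)) :=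
    (hc₁.sub hc₂).congr fun x => by ring
  have hgt : ∀ᶠ x in 𝓝[<] x₀, y₂ x < y₁ x :=
    (eventually_pos_of_tendsto_div_pow ⟨2, rfl⟩ (sub_pos.2 hc) hdiff).mono fun _ => sub_pos.1
  have hderiv := painleveI_eventually_deriv_lt ha₁ ha₂ h₁ h₂ hpole₁ hpole₂ hgt
    (tendsto_zero_of_tendsto_div_pow four_ne_zero hdiff)
  have hpos := eventually_deriv_pos_of_tendsto_atTop ha₁ (fun x hx => (h₁ x hx).1)
    (IsPainleveISolutionOn.strictMonoOn_deriv h₁ hx₀).monotoneOn hpole₁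
  refine ⟨?_, fun xm₁ hxm₁ xm₂ hxm₂ hmin₁ hmin₂ => ?_⟩
  · obtain ⟨l, hl, hsub⟩ := mem_nhdsLT_iff_exists_Ioo_subset.1 (hgt.and (hpos.and hderiv))
    exact ⟨x₀ - l, sub_pos.2 hl, fun x hx => hsub (by rwa [sub_sub_cancel] at hx)⟩
  · exact painleveI_value_lt_of_deriv_eq_zero hx₀ h₁ h₂ hpole₁ hpole₂ (hgt.and hderiv) hxm₁ hxm₂
      ((hmin₁.isLocalMin (isOpen_Ioo.mem_nhds hxm₁)).hasDerivAt_eq_zero (h₁ xm₁ hxm₁).1)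
      ((hmin₂.isLocalMin (isOpen_Ioo.mem_nhds hxm₂)).hasDerivAt_eq_zero (h₂ xm₂ hxm₂).1)

/-- Two solutions of `y'' = 6y² - x` with a pole at `x₀ ≤ 0`, intervals of
existence to the left of `x₀`, and Laurent parameters `c₁ > c₂`, satisfy
`y₁ > y₂` and `0 < y₁' < y₂'` in some left neighbourhood of `x₀`, and their
minimum values satisfy `y₁,min > y₂,min`. -/
theorem painleveI_laurent_parameter_monotone
    (x₀ a₁ a₂ c₁ c₂ : ℝ) (hx₀ : x₀ ≤ 0) (ha₁ : a₁ < x₀) (ha₂ : a₂ < x₀)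
    (y₁ y₁' y₂ y₂' : ℝ → ℝ)
    (h₁ : ∀ x ∈ Set.Ioo a₁ x₀,
      HasDerivAt y₁ (y₁' x) x ∧ HasDerivAt y₁' (6 * (y₁ x) ^ 2 - x) x)
    (h₂ : ∀ x ∈ Set.Ioo a₂ x₀,
      HasDerivAt y₂ (y₂' x) x ∧ HasDerivAt y₂' (6 * (y₂ x) ^ 2 - x) x)
    (hblow₁ : Tendsto y₁ (𝓝[>] a₁) atTop)
    (hblow₂ : Tendsto y₂ (𝓝[>] a₂) atTop)
    (hpole₁ : Tendsto y₁ (𝓝[<] x₀) atTop)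
    (hpole₂ : Tendsto y₂ (𝓝[<] x₀) atTop)
    (hc₁ : Tendsto (fun x : ℝ =>
        (y₁ x - 1 / (x - x₀) ^ 2 - (x₀ / 10) * (x - x₀) ^ 2
          - (1 / 6) * (x - x₀) ^ 3) / (x - x₀) ^ 4) (𝓝[<] x₀) (𝓝 c₁))
    (hc₂ : Tendsto (fun x : ℝ =>
        (y₂ x - 1 / (x - x₀) ^ 2 - (x₀ / 10) * (x - x₀) ^ 2
          - (1 / 6) * (x - x₀) ^ 3) / (x - x₀) ^ 4) (𝓝[<] x₀) (𝓝 c₂))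
    (hc : c₂ < c₁) :
    (∃ δ > 0, ∀ x ∈ Set.Ioo (x₀ - δ) x₀,
      y₂ x < y₁ x ∧ 0 < y₁' x ∧ y₁' x < y₂' x) ∧
    (∀ xm₁ ∈ Set.Ioo a₁ x₀, ∀ xm₂ ∈ Set.Ioo a₂ x₀,
      IsMinOn y₁ (Set.Ioo a₁ x₀) xm₁ → IsMinOn y₂ (Set.Ioo a₂ x₀) xm₂ →
      y₂ xm₂ < y₁ xm₁) :=
  painleveI_laurent_parameter_monotone_general x₀ a₁ a₂ c₁ c₂ hx₀ ha₁ ha₂ y₁ y₁' y₂ y₂' h₁ h₂ hpole₁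
    hpole₂ hc₁ hc₂ hc
end
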